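/- arXiv:1305.1430 — 10 statements merged into one kernel-verified Lean document; each statement's English description precedes it below -/
import Mathlib

section
/- Let A be a (not necessarily unital) Γ-graded ring possessing a set E of homogeneous local units, i.e., a set of commuting idempotents, each lying in the degree-zero component A_0, such that for every x ∈ A there is e ∈ E with e*x = x*e = x. Then A is graded von Neumann regular if and only if every finitely generated graded right ideal of A is generated (as a right ideal) by a single homogeneous idempotent element. -/
/-- A right ideal of a (possibly non-unital) ring: an additive subgroup closed
under right multiplication by arbitrary ring elements. -/
structure RightIdealNU (A : Type*) [NonUnitalRing A] extends AddSubgroup A where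
  mul_mem_right' : ∀ x ∈ carrier, ∀ a : A, x * a ∈ carrier

/-- `I` is the right ideal generated by the set `S`: it contains `S` and is the
smallest right ideal doing so. -/
def RightIdealNU.IsGenBy {A : Type*} [NonUnitalRing A] (I : RightIdealNU A) (S : Set A) : Prop :=
  S ⊆ I.carrier ∧ ∀ J : RightIdealNU A, S ⊆ J.carrier → I.carrier ⊆ J.carrier

/-- A graded (not necessarily unital) ring `A` is graded von Neumann regular if every
homogeneous element `x` satisfies `x ∈ xAx`. -/
def GradedVNRegularNU {Γ : Type*} [AddCommGroup Γ] {A : Type*} [NonUnitalRing A]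
    (𝒜 : Γ → AddSubgroup A) : Prop :=
  ∀ γ : Γ, ∀ x ∈ 𝒜 γ, ∃ y : A, x * y * x = x

section Aux
variable {Γ : Type*} [AddCommGroup Γ] [DecidableEq Γ]
variable {A : Type*} [NonUnitalRing A] (𝒜 : Γ → AddSubgroup A)
variable [DirectSum.Decomposition 𝒜] [SetLike.GradedMul 𝒜]

lemma mem_rightIdeal_iff (J : RightIdealNU A) (x : A) :
    x ∈ J.carrier ↔ x ∈ J.toAddSubgroup := Iff.rfl

lemma decompose_mul_left' (γ δ : Γ) (x : A) (hx : x ∈ 𝒜 γ) (a : A) :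
    (DirectSum.decompose 𝒜 (x * a) (γ + δ) : A) = x * (DirectSum.decompose 𝒜 a δ : A) := by
  induction a using DirectSum.Decomposition.inductionOn 𝒜 with
  | zero => simp
  | homogeneous m =>
      rename_i μ
      by_cases h : μ = δ
      · subst h
        rw [DirectSum.decompose_of_mem_same 𝒜 (SetLike.mul_mem_graded hx m.2),
          DirectSum.decompose_of_mem_same 𝒜 m.2]
      · rw [DirectSum.decompose_of_mem_ne 𝒜 (SetLike.mul_mem_graded hx m.2)
          (fun hc => h (by exact add_left_cancel hc)),
          DirectSum.decompose_of_mem_ne 𝒜 m.2 h, mul_zero]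
  | add m m' hm hm' =>
      rw [mul_add, DirectSum.decompose_add, DirectSum.decompose_add]
      simp only [DirectSum.add_apply, AddSubgroup.coe_add, hm, hm', mul_add]

lemma decompose_mul_right' (γ δ : Γ) (x : A) (hx : x ∈ 𝒜 γ) (a : A) :
    (DirectSum.decompose 𝒜 (a * x) (δ + γ) : A) = (DirectSum.decompose 𝒜 a δ : A) * x := by
  induction a using DirectSum.Decomposition.inductionOn 𝒜 with
  | zero => simp
  | homogeneous m =>
      rename_i μ
      by_cases h : μ = δ
      · subst h
        rw [DirectSum.decompose_of_mem_same 𝒜 (SetLike.mul_mem_graded m.2 hx),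
          DirectSum.decompose_of_mem_same 𝒜 m.2]
      · rw [DirectSum.decompose_of_mem_ne 𝒜 (SetLike.mul_mem_graded m.2 hx)
          (fun hc => h (by exact add_right_cancel hc)),
          DirectSum.decompose_of_mem_ne 𝒜 m.2 h, zero_mul]
  | add m m' hm hm' =>
      rw [add_mul, DirectSum.decompose_add, DirectSum.decompose_add]
      simp only [DirectSum.add_apply, AddSubgroup.coe_add, hm, hm', add_mul]

/-- regularity with homogeneous quasi-inverse -/
lemma exists_homog_y (hreg : GradedVNRegularNU 𝒜) {γ : Γ} {x : A} (hx : x ∈ 𝒜 γ) :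
    ∃ y ∈ 𝒜 (-γ), x * y * x = x := by
  obtain ⟨y, hy⟩ := hreg γ x hx
  refine ⟨DirectSum.decompose 𝒜 y (-γ), SetLike.coe_mem _, ?_⟩
  have h1 : (DirectSum.decompose 𝒜 (y * x) (-γ + γ) : A)
      = (DirectSum.decompose 𝒜 y (-γ) : A) * x := decompose_mul_right' 𝒜 γ (-γ) x hx y
  have h2 : (DirectSum.decompose 𝒜 (x * (y * x)) (γ + (-γ + γ)) : A)
      = x * (DirectSum.decompose 𝒜 (y * x) (-γ + γ) : A) :=
    decompose_mul_left' 𝒜 γ (-γ + γ) x hx (y * x)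
  have e1 : γ + (-γ + γ) = γ := by abel
  have e2 : x * (y * x) = x := by rw [← mul_assoc]; exact hy
  rw [mul_assoc, ← h1, ← h2, e1, e2, DirectSum.decompose_of_mem_same 𝒜 hx]

/-- `S` and `T` generate the same right ideal. -/
def GenEquiv {A : Type*} [NonUnitalRing A] (S T : Set A) : Prop :=
  ∀ J : RightIdealNU A, S ⊆ J.carrier ↔ T ⊆ J.carrier

lemma GenEquiv.union {A : Type*} [NonUnitalRing A] {S₁ S₂ T₁ T₂ : Set A}
    (h1 : GenEquiv S₁ T₁) (h2 : GenEquiv S₂ T₂) : GenEquiv (S₁ ∪ S₂) (T₁ ∪ T₂) := by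
  intro J
  rw [Set.union_subset_iff, Set.union_subset_iff, h1 J, h2 J]

lemma gen_single (hreg : GradedVNRegularNU 𝒜) {γ : Γ} {x : A} (hx : x ∈ 𝒜 γ) :
    ∃ e : A, e * e = e ∧ e ∈ 𝒜 0 ∧ GenEquiv {e} {x} := by
  obtain ⟨y, hy, hxyx⟩ := exists_homog_y 𝒜 hreg hx
  refine ⟨x * y, ?_, ?_, ?_⟩
  · rw [← mul_assoc, hxyx]
  · have := SetLike.mul_mem_graded hx hy
    rwa [add_neg_cancel] at this
  · intro J
    simp only [Set.singleton_subset_iff]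
    constructor
    · intro h
      have := J.mul_mem_right' _ h x
      rwa [hxyx] at this
    · intro h
      exact J.mul_mem_right' _ h y

lemma pair_core {A : Type*} [NonUnitalRing A] {e g : A}
    (hee : e * e = e) (hgg : g * g = g) (heg : e * g = 0) :
    ((g - g * e) * e = 0) ∧ (e * (g - g * e) = 0) ∧ ((g - g * e) * g = g) ∧
      ((g - g * e) * (g - g * e) = g - g * e) := by
  have hg'e : (g - g * e) * e = 0 := by rw [sub_mul, mul_assoc, hee, sub_self]
  have heg' : e * (g - g * e) = 0 := by
    rw [mul_sub, ← mul_assoc, heg, zero_mul, sub_zero]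
  have hg'g : (g - g * e) * g = g := by
    rw [sub_mul, mul_assoc, heg, mul_zero, sub_zero, hgg]
  have hg'g' : (g - g * e) * (g - g * e) = g - g * e := by
    rw [mul_sub, ← mul_assoc, hg'g]
  exact ⟨hg'e, heg', hg'g, hg'g'⟩

lemma gen_pair (hreg : GradedVNRegularNU 𝒜) {e f : A}
    (he0 : e ∈ 𝒜 0) (hf0 : f ∈ 𝒜 0) (hee : e * e = e) :
    ∃ h : A, h * h = h ∧ h ∈ 𝒜 0 ∧ GenEquiv {h} {e, f} := by
  have hef' : e * (f - e * f) = 0 := by rw [mul_sub, ← mul_assoc, hee, sub_self]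
  have hf'0 : f - e * f ∈ 𝒜 0 := by
    refine AddSubgroup.sub_mem _ hf0 ?_
    have := SetLike.mul_mem_graded he0 hf0
    rwa [add_zero] at this
  obtain ⟨y, hy0, hfyf⟩ := exists_homog_y 𝒜 hreg hf'0
  obtain ⟨f', hf'def⟩ : ∃ t, f - e * f = t := ⟨_, rfl⟩
  rw [hf'def] at hef' hf'0 hfyf
  have hg0 : f' * y ∈ 𝒜 0 := by
    have := SetLike.mul_mem_graded hf'0 hy0
    rwa [neg_zero, add_zero] at this
  have hgg : (f' * y) * (f' * y) = f' * y := by rw [← mul_assoc, hfyf]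
  have heg : e * (f' * y) = 0 := by rw [← mul_assoc, hef', zero_mul]
  have hgf' : (f' * y) * f' = f' := hfyf
  obtain ⟨g, hgdef⟩ : ∃ t, f' * y = t := ⟨_, rfl⟩
  rw [hgdef] at hg0 hgg heg hgf'
  obtain ⟨hg'e, heg', hg'g, hg'g'⟩ := pair_core hee hgg heg
  refine ⟨e + (g - g * e), ?_, ?_, ?_⟩
  · rw [add_mul, mul_add, mul_add, hee, heg', add_zero, hg'e, hg'g', zero_add]
  · exact AddSubgroup.add_mem _ he0 (AddSubgroup.sub_mem _ hg0
      (by have := SetLike.mul_mem_graded hg0 he0; rwa [add_zero] at this))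
  · intro J
    simp only [Set.singleton_subset_iff, Set.insert_subset_iff]
    constructor
    · intro hh
      have he_mem : e ∈ J.carrier := by
        have := J.mul_mem_right' _ hh e
        rwa [add_mul, hee, hg'e, add_zero] at this
      have hg_mem : g ∈ J.carrier := by
        have := J.mul_mem_right' _ hh g
        rwa [add_mul, heg, hg'g, zero_add] at this
      refine ⟨he_mem, ?_⟩
      have hf'_mem : f' ∈ J.carrier := by
        have := J.mul_mem_right' _ hg_mem f'
        rwa [hgf'] at this
      have hef_mem : e * f ∈ J.carrier := J.mul_mem_right' _ he_mem f
      have hsum := J.toAddSubgroup.add_mem hef_mem hf'_mem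
      rw [← hf'def, add_sub_cancel] at hsum
      exact hsum
    · rintro ⟨he_mem, hf_mem⟩
      have hf'_mem : f' ∈ J.carrier := by
        rw [← hf'def]
        exact J.toAddSubgroup.sub_mem hf_mem (J.mul_mem_right' _ he_mem f)
      have hg_mem : g ∈ J.carrier := by
        rw [← hgdef]
        exact J.mul_mem_right' _ hf'_mem y
      have hg'_mem : g - g * e ∈ J.carrier :=
        J.toAddSubgroup.sub_mem hg_mem (J.mul_mem_right' _ hg_mem e)
      exact J.toAddSubgroup.add_mem he_mem hg'_mem

lemma gen_finset (hreg : GradedVNRegularNU 𝒜) (S : Finset A)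
    (hS : ∀ x ∈ S, ∃ γ, x ∈ 𝒜 γ) :
    ∃ e : A, e * e = e ∧ e ∈ 𝒜 0 ∧ GenEquiv {e} (S : Set A) := by
  classical
  induction S using Finset.induction_on with
  | empty =>
      refine ⟨0, by rw [mul_zero], AddSubgroup.zero_mem _, fun J => ⟨fun _ => ?_, fun _ => ?_⟩⟩
      · intro z hz
        simp at hz
      · intro z hz
        rw [Set.mem_singleton_iff] at hz
        subst hz
        exact J.toAddSubgroup.zero_mem
  | insert _ _ hx ih =>
      rename_i x S'
      obtain ⟨e, hee, he0, heS⟩ := ih (fun z hz => hS z (Finset.mem_insert_of_mem hz))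
      obtain ⟨γ, hxγ⟩ := hS x (Finset.mem_insert_self x S')
      obtain ⟨f, hff, hf0, hfx⟩ := gen_single 𝒜 hreg hxγ
      obtain ⟨h, hhh, hh0, hhef⟩ := gen_pair 𝒜 hreg hf0 he0 hff
      refine ⟨h, hhh, hh0, fun J => ?_⟩
      rw [hhef J]
      have : ({f, e} : Set A) = {f} ∪ {e} := Set.insert_eq f {e}
      rw [this, Set.union_subset_iff, hfx J, heS J, Finset.coe_insert, Set.insert_eq,
        Set.union_subset_iff]

/-- the principal right ideal `xA` (as a set, `Set.range (x * ·)`). -/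
def prIdeal {A : Type*} [NonUnitalRing A] (x : A) : RightIdealNU A where
  carrier := Set.range (x * ·)
  zero_mem' := ⟨0, mul_zero x⟩
  add_mem' := by
    rintro a b ⟨u, rfl⟩ ⟨v, rfl⟩
    exact ⟨u + v, mul_add x u v⟩
  neg_mem' := by
    rintro a ⟨u, rfl⟩
    exact ⟨-u, by simp [mul_neg]⟩
  mul_mem_right' := by
    rintro z ⟨u, rfl⟩ a
    exact ⟨u * a, (mul_assoc x u a).symm⟩

end Aux

theorem graded_regular_iff_fg_graded_right_ideal_gen_by_homogeneous_idempotent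
    {Γ : Type*} [AddCommGroup Γ] [DecidableEq Γ]
    {A : Type*} [NonUnitalRing A] (𝒜 : Γ → AddSubgroup A)
    [DirectSum.Decomposition 𝒜] [SetLike.GradedMul 𝒜]
    (E : Set A)
    (hE0 : ∀ e ∈ E, e ∈ 𝒜 0)
    (hEidem : ∀ e ∈ E, e * e = e)
    (hEcomm : ∀ e ∈ E, ∀ f ∈ E, e * f = f * e)
    (hElocal : ∀ x : A, ∃ e ∈ E, e * x = x ∧ x * e = x) :
    GradedVNRegularNU 𝒜 ↔
      ∀ I : RightIdealNU A,
        (∀ x ∈ I.carrier, ∀ γ : Γ, (DirectSum.decompose 𝒜 x γ : A) ∈ I.carrier) →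
        (∃ S : Finset A, I.IsGenBy (S : Set A)) →
        ∃ e : A, e * e = e ∧ (∃ γ : Γ, e ∈ 𝒜 γ) ∧ I.IsGenBy {e} := by
  classical
  constructor
  · -- forward direction
    rintro hreg I hgraded ⟨S, hSsub, hSgen⟩
    set T : Finset A := S.biUnion (fun s => (DirectSum.decompose 𝒜 s).support.image
      (fun γ => (DirectSum.decompose 𝒜 s γ : A))) with hT
    have hTmem : ∀ z, z ∈ T ↔ ∃ s ∈ S, ∃ γ ∈ (DirectSum.decompose 𝒜 s).support,
        (DirectSum.decompose 𝒜 s γ : A) = z := by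
      intro z
      simp only [hT, Finset.mem_biUnion, Finset.mem_image]
    have hThom : ∀ z ∈ T, ∃ γ, z ∈ 𝒜 γ := by
      intro z hz
      obtain ⟨s, _, γ, _, rfl⟩ := (hTmem z).mp hz
      exact ⟨γ, SetLike.coe_mem _⟩
    obtain ⟨e, hee, he0, heT⟩ := gen_finset 𝒜 hreg T hThom
    have hTI : (T : Set A) ⊆ I.carrier := by
      intro z hz
      obtain ⟨s, hs, γ, _, rfl⟩ := (hTmem z).mp (Finset.mem_coe.mp hz)
      exact hgraded s (hSsub (Finset.mem_coe.mpr hs)) γ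
    have hST : ∀ J : RightIdealNU A, (T : Set A) ⊆ J.carrier → (S : Set A) ⊆ J.carrier := by
      intro J hTJ s hs
      have hds := DirectSum.sum_support_decompose 𝒜 s
      have : s ∈ J.toAddSubgroup := by
        rw [← hds]
        refine AddSubgroup.sum_mem _ ?_
        intro γ hγ
        exact hTJ (Finset.mem_coe.mpr ((hTmem _).mpr
          ⟨s, Finset.mem_coe.mp hs, γ, hγ, rfl⟩))
      exact this
    exact ⟨e, hee, ⟨0, he0⟩, (heT I).mpr hTI,
      fun J heJ => hSgen J (hST J ((heT J).mp heJ))⟩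
  · -- backward direction
    intro hyp γ x hx
    obtain ⟨u, _, _, hxu⟩ := hElocal x
    have hgraded : ∀ z ∈ (prIdeal x).carrier, ∀ δ : Γ,
        (DirectSum.decompose 𝒜 z δ : A) ∈ (prIdeal x).carrier := by
      rintro z ⟨a, rfl⟩ δ
      have h1 : (DirectSum.decompose 𝒜 (x * a) (γ + (-γ + δ)) : A)
          = x * (DirectSum.decompose 𝒜 a (-γ + δ) : A) :=
        decompose_mul_left' 𝒜 γ (-γ + δ) x hx a
      have e1 : γ + (-γ + δ) = δ := by abel
      rw [e1] at h1
      exact ⟨_, h1.symm⟩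
    have hfin : ∃ S : Finset A, (prIdeal x).IsGenBy (S : Set A) := by
      refine ⟨{x}, ?_, ?_⟩
      · rw [Finset.coe_singleton, Set.singleton_subset_iff]
        exact ⟨u, hxu⟩
      · intro J hJ z hz
        obtain ⟨a, rfl⟩ := hz
        exact J.mul_mem_right' x (hJ (by simp)) a
    obtain ⟨e, hee, -, hesub, hgen⟩ := hyp (prIdeal x) hgraded hfin
    obtain ⟨y, hy⟩ := hesub (Set.mem_singleton e)
    have hxmem : x ∈ (prIdeal e).carrier := by
      refine hgen (prIdeal e) ?_ ⟨u, hxu⟩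
      rw [Set.singleton_subset_iff]
      exact ⟨e, hee⟩
    obtain ⟨b, hb⟩ := hxmem
    have hy' : x * y = e := hy
    have hb' : e * b = x := hb
    refine ⟨y, ?_⟩
    calc x * y * x = e * x := by rw [hy']
      _ = e * (e * b) := by rw [← hb']
      _ = (e * e) * b := (mul_assoc e e b).symm
      _ = e * b := by rw [hee]
      _ = x := hb'
end

section
/- Let A be a unital Γ-graded ring which is graded von Neumann regular. Then every finitely generated graded right ideal of A is projective as a right A-module. -/
/-- A graded unital ring `A` is graded von Neumann regular if every homogeneous
element `x` satisfies `x ∈ xAx`. -/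
def GradedVNRegular {Γ : Type*} [AddCommGroup Γ] {A : Type*} [Ring A]
    (𝒜 : Γ → AddSubgroup A) : Prop :=
  ∀ γ : Γ, ∀ x ∈ 𝒜 γ, ∃ y : A, x * y * x = x

/-- Any right multiple of `u` lies in the right ideal generated by `u`. -/
lemma VNRaux.mem_span_single {A : Type*} [Ring A] (u c : A) :
    u * c ∈ Submodule.span Aᵐᵒᵖ ({u} : Set A) := by
  rw [← op_smul_eq_mul]
  exact Submodule.smul_mem _ _ (Submodule.mem_span_singleton_self u)

/-- Homogeneous refinement of the regularity witness. -/
lemma VNRaux.homog_reg {Γ : Type*} [AddCommGroup Γ] [DecidableEq Γ] {A : Type*} [Ring A]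
    (𝒜 : Γ → AddSubgroup A) [GradedRing 𝒜] (hA : GradedVNRegular 𝒜) {γ : Γ} {h : A}
    (hh : h ∈ 𝒜 γ) : ∃ z ∈ 𝒜 (-γ), h * z * h = h := by
  obtain ⟨y, hy⟩ := hA γ h hh
  refine ⟨(DirectSum.decompose 𝒜 y (-γ) : A), SetLike.coe_mem _, ?_⟩
  have e1 : (DirectSum.decompose 𝒜 (h * y) 0 : A)
      = h * (DirectSum.decompose 𝒜 y (-γ) : A) := by
    have := DirectSum.coe_decompose_mul_add_of_left_mem 𝒜 (j := -γ) (b := y) hh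
    rwa [add_neg_cancel] at this
  have e2 : (DirectSum.decompose 𝒜 (h * y * h) γ : A)
      = (DirectSum.decompose 𝒜 (h * y) 0 : A) * h := by
    have := DirectSum.coe_decompose_mul_add_of_right_mem 𝒜 (i := (0 : Γ)) (a := h * y) hh
    rwa [zero_add] at this
  rw [← e1, ← e2, hy, DirectSum.decompose_of_mem_same 𝒜 hh]

/-- Key ring computation: combining an idempotent `e` and an element `x` into
a single idempotent generator of the right ideal `eA + xA`. -/
lemma VNRaux.key {A : Type*} [Ring A] (e x z : A) (he : e * e = e)
    (hz : (x - e * x) * z * (x - e * x) = x - e * x) :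
    ((e + (x - e * x) * z - (x - e * x) * z * e) * (e + (x - e * x) * z - (x - e * x) * z * e)
      = e + (x - e * x) * z - (x - e * x) * z * e) ∧
    Submodule.span Aᵐᵒᵖ ({e + (x - e * x) * z - (x - e * x) * z * e} : Set A)
      = Submodule.span Aᵐᵒᵖ ({e} : Set A) ⊔ Submodule.span Aᵐᵒᵖ ({x} : Set A) := by
  set h := x - e * x with hhdef
  set k := h * z with hkdef
  set g := e + k - k * e with hgdef
  have heh : e * h = 0 := by rw [hhdef, mul_sub, ← mul_assoc, he, sub_self]
  have hek : e * k = 0 := by rw [hkdef, ← mul_assoc, heh, zero_mul]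
  have hkh : k * h = h := by rw [hkdef]; exact hz
  have hkk : k * k = k := by
    calc k * k = (k * h) * z := by rw [hkdef]; noncomm_ring
    _ = k := by rw [hkh, hkdef]
  have hge : g * e = e := by
    calc g * e = e * e + k * e - k * (e * e) := by rw [hgdef]; noncomm_ring
    _ = e := by rw [he]; abel
  have hgk : g * k = k := by
    calc g * k = e * k + k * k - k * (e * k) := by rw [hgdef]; noncomm_ring
    _ = k := by rw [hek, hkk, mul_zero]; abel
  have hgg : g * g = g := by
    calc g * g = g * e + g * k - (g * k) * e := by rw [hgdef]; noncomm_ring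
    _ = g := by rw [hge, hgk, hgdef]
  have hgx : g * (e * x + k * h) = x := by
    calc g * (e * x + k * h) = (g * e) * x + (g * k) * h := by noncomm_ring
    _ = x := by rw [hge, hgk, hkh, hhdef]; abel
  have hcomb : e * (1 - x * z + x * z * e) + x * (z - z * e) = g := by
    rw [hgdef, hkdef, hhdef]; noncomm_ring
  refine ⟨hgg, le_antisymm ?_ (sup_le ?_ ?_)⟩
  · rw [Submodule.span_singleton_le_iff_mem, ← hcomb]
    exact add_mem (Submodule.mem_sup_left (VNRaux.mem_span_single _ _))
      (Submodule.mem_sup_right (VNRaux.mem_span_single _ _))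
  · rw [Submodule.span_singleton_le_iff_mem, ← hge]
    exact VNRaux.mem_span_single _ _
  · rw [Submodule.span_singleton_le_iff_mem, ← hgx]
    exact VNRaux.mem_span_single _ _

/-- The span of finitely many homogeneous elements is generated by a single
homogeneous idempotent of degree `0`. -/
lemma VNRaux.span_homog_eq_idem {Γ : Type*} [AddCommGroup Γ] [DecidableEq Γ] {A : Type*}
    [Ring A] (𝒜 : Γ → AddSubgroup A) [GradedRing 𝒜] (hA : GradedVNRegular 𝒜)
    (T : Finset A) :
    (∀ t ∈ T, ∃ γ, t ∈ 𝒜 γ) →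
      ∃ e : A, e * e = e ∧ e ∈ 𝒜 0 ∧
        Submodule.span Aᵐᵒᵖ (T : Set A) = Submodule.span Aᵐᵒᵖ ({e} : Set A) := by
  classical
  induction T using Finset.induction_on with
  | empty =>
    exact fun _ => ⟨0, by simp, zero_mem _, by
      simp [Submodule.span_empty, Submodule.span_zero_singleton]⟩
  | @insert x T hx ih =>
    intro hT
    obtain ⟨e, he, he0, hspan⟩ := ih fun t ht => hT t (Finset.mem_insert_of_mem ht)
    obtain ⟨γ, hxγ⟩ := hT x (Finset.mem_insert_self x T)
    have hex : e * x ∈ 𝒜 γ := by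
      have := SetLike.mul_mem_graded he0 hxγ
      rwa [zero_add] at this
    have hhγ : x - e * x ∈ 𝒜 γ := sub_mem hxγ hex
    obtain ⟨z, hzγ, hz⟩ := VNRaux.homog_reg 𝒜 hA hhγ
    obtain ⟨hgg, hgspan⟩ := VNRaux.key e x z he hz
    have hk0 : (x - e * x) * z ∈ 𝒜 0 := by
      have := SetLike.mul_mem_graded hhγ hzγ
      rwa [add_neg_cancel] at this
    have hg0 : e + (x - e * x) * z - (x - e * x) * z * e ∈ 𝒜 0 := by
      refine sub_mem (add_mem he0 hk0) ?_
      have := SetLike.mul_mem_graded hk0 he0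
      rwa [add_zero] at this
    refine ⟨e + (x - e * x) * z - (x - e * x) * z * e, hgg, hg0, ?_⟩
    rw [Finset.coe_insert, Submodule.span_insert, hspan, hgspan, sup_comm]

/-- `A` is projective as a right module over itself. -/
lemma VNRaux.projective_self (A : Type*) [Ring A] : Module.Projective Aᵐᵒᵖ A := by
  refine Module.Projective.of_equiv (R := Aᵐᵒᵖ) (M := Aᵐᵒᵖ) (σ := RingHom.id Aᵐᵒᵖ)
    { toFun := MulOpposite.unop
      invFun := MulOpposite.op
      map_add' := fun _ _ => rfl
      map_smul' := fun _ _ => rfl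
      left_inv := fun _ => rfl
      right_inv := fun _ => rfl }

/-- In a graded von Neumann regular unital ring, every finitely generated graded
right ideal (a submodule of `A` as a right `A`-module, i.e. an `Aᵐᵒᵖ`-submodule)
is projective as a right `A`-module. -/
theorem fg_graded_right_ideal_projective_of_graded_regular
    {Γ : Type*} [AddCommGroup Γ] [DecidableEq Γ]
    {A : Type*} [Ring A] (𝒜 : Γ → AddSubgroup A) [GradedRing 𝒜]
    (hA : GradedVNRegular 𝒜)
    (I : Submodule Aᵐᵒᵖ A)
    (hgr : ∀ x ∈ I, ∀ γ : Γ, (DirectSum.decompose 𝒜 x γ : A) ∈ I)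
    (hfg : I.FG) :
    Module.Projective Aᵐᵒᵖ I := by
  classical
  obtain ⟨S, hS⟩ := hfg
  -- replace the generators by their homogeneous components
  set T : Finset A := S.biUnion
    (fun s => (DirectSum.decompose 𝒜 s).support.image
      (fun γ => (DirectSum.decompose 𝒜 s γ : A))) with hTdef
  have hT : ∀ t ∈ T, ∃ γ, t ∈ 𝒜 γ := by
    intro t ht
    rw [hTdef, Finset.mem_biUnion] at ht
    obtain ⟨s, _, ht⟩ := ht
    obtain ⟨γ, _, rfl⟩ := Finset.mem_image.mp ht
    exact ⟨γ, SetLike.coe_mem _⟩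
  have hSI : ∀ s ∈ S, s ∈ I := fun s hs => hS ▸ Submodule.subset_span hs
  have hTI : Submodule.span Aᵐᵒᵖ (T : Set A) = I := by
    apply le_antisymm
    · rw [Submodule.span_le]
      intro t ht
      rw [hTdef] at ht
      simp only [Finset.coe_biUnion, Set.mem_iUnion, Finset.mem_coe] at ht
      obtain ⟨s, hs, ht⟩ := ht
      obtain ⟨γ, _, rfl⟩ := Finset.mem_image.mp ht
      exact hgr s (hSI s hs) γ
    · rw [← hS, Submodule.span_le]
      intro s hs
      rw [← DirectSum.sum_support_decompose 𝒜 s]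
      refine sum_mem fun γ hγ => Submodule.subset_span ?_
      rw [hTdef]
      simp only [Finset.coe_biUnion, Set.mem_iUnion, Finset.mem_coe]
      exact ⟨s, hs, Finset.mem_image.mpr ⟨γ, hγ, rfl⟩⟩
  obtain ⟨e, he, -, hspan⟩ := VNRaux.span_homog_eq_idem 𝒜 hA T hT
  have hI : I = Submodule.span Aᵐᵒᵖ ({e} : Set A) := by rw [← hTI, hspan]
  -- the retraction `a ↦ e * a`
  have := VNRaux.projective_self A
  refine Module.Projective.of_split (R := Aᵐᵒᵖ) (M := A) I.subtype
    { toFun := fun a => ⟨e * a, by rw [hI]; exact VNRaux.mem_span_single e a⟩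
      map_add' := fun a b => Subtype.ext (mul_add e a b)
      map_smul' := fun r a => Subtype.ext (by
        simp only [RingHom.id_apply, SetLike.mk_smul_mk]
        show e * (r • a) = r • (e * a)
        induction r using MulOpposite.rec' with
        | h b => rw [op_smul_eq_mul, op_smul_eq_mul, mul_assoc]) }
    ?_
  ext x
  have hx : (x : A) ∈ Submodule.span Aᵐᵒᵖ ({e} : Set A) := by rw [← hI]; exact x.2
  obtain ⟨c, hc⟩ := Submodule.mem_span_singleton.mp hx
  have hc' : e * x.1 = x.1 := by
    induction c using MulOpposite.rec' with
    | h b =>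
      rw [op_smul_eq_mul] at hc
      rw [← hc, ← mul_assoc, he]
  simp only [LinearMap.coe_comp, Function.comp_apply, Submodule.coe_subtype,
    LinearMap.id_coe, id_eq, LinearMap.coe_mk, AddHom.coe_mk]
  exact hc'
end

section
/- Let A be a unital ℤ-graded ring which is graded von Neumann regular. Then the Jacobson radical of A is zero, i.e., J(A) = 0. -/
section JacHelpers
variable {A : Type*} [Ring A]

private lemma jac_left_inv {x : A} (hx : x ∈ Ideal.jacobson (⊥ : Ideal A)) (c : A) :
    ∃ u : A, u * (1 - c * x) = 1 := by
  obtain ⟨z, hz⟩ := Ideal.mem_jacobson_iff.mp hx (-c)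
  rw [Ideal.mem_bot] at hz
  refine ⟨z, ?_⟩
  have h : z * -c * x + z - 1 = z * (1 - c * x) - 1 := by noncomm_ring
  rw [h] at hz
  exact sub_eq_zero.mp hz

private lemma jac_of_left_inv {x : A} (h : ∀ c : A, ∃ u : A, u * (1 - c * x) = 1) :
    x ∈ Ideal.jacobson (⊥ : Ideal A) := by
  rw [Ideal.mem_jacobson_iff]
  intro y
  obtain ⟨u, hu⟩ := h (-y)
  refine ⟨u, ?_⟩
  rw [Ideal.mem_bot]
  have h2 : u * (1 - -y * x) = u * y * x + u := by noncomm_ring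
  rw [h2] at hu
  rw [hu]; simp

private lemma jac_mul_right {x : A} (hx : x ∈ Ideal.jacobson (⊥ : Ideal A)) (r : A) :
    x * r ∈ Ideal.jacobson (⊥ : Ideal A) := by
  apply jac_of_left_inv
  intro c
  obtain ⟨u, hu⟩ := jac_left_inv hx (r * c)
  refine ⟨1 + c * x * u * r, ?_⟩
  have : (1 + c * x * u * r) * (1 - c * (x * r))
      = 1 - c * x * r + c * x * (u * (1 - r * c * x)) * r := by noncomm_ring
  rw [this]
  have h3 : u * (1 - r * c * x) = 1 := by
    have : r * c * x = r * c * x := rfl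
    simpa [mul_assoc] using hu
  rw [h3]; noncomm_ring

private lemma jac_isUnit {x : A} (hx : x ∈ Ideal.jacobson (⊥ : Ideal A)) (c : A) :
    ∃ u : A, u * (1 - c * x) = 1 ∧ (1 - c * x) * u = 1 := by
  obtain ⟨u, hu⟩ := jac_left_inv hx c
  have hu' : u = 1 - (-(u * c)) * x := by
    have h : u * (1 - c * x) = u - u * c * x := by noncomm_ring
    rw [h] at hu
    calc u = 1 + u * c * x := sub_eq_iff_eq_add.mp hu
    _ = 1 - (-(u * c)) * x := by noncomm_ring
  obtain ⟨v, hv⟩ := jac_left_inv hx (-(u * c))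
  rw [← hu'] at hv
  -- hv : v * u = 1
  have h1 : (1 - c * x) = v := by
    calc (1 - c * x) = (v * u) * (1 - c * x) := by rw [hv, one_mul]
    _ = v * (u * (1 - c * x)) := by rw [mul_assoc]
    _ = v := by rw [hu, mul_one]
  exact ⟨u, hu, by rw [h1, hv]⟩

private lemma corner_inv {t f c : A}
    (htJ : t ∈ Ideal.jacobson (⊥ : Ideal A)) (htf : t * f = t) (hfc : f * c = c)
    (hf : f * f = f) :
    ∃ q : A, q * (f - c * t) = f ∧ (f - c * t) * q = f ∧ f * q = q ∧ q * f = q := by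
  obtain ⟨u, hu1, hu2⟩ := jac_isUnit htJ c
  have hA1 : (f - c * t) * f = f - c * t := by
    calc (f - c * t) * f = f * f - c * (t * f) := by noncomm_ring
    _ = f - c * t := by rw [hf, htf]
  have hA2 : f * (f - c * t) = f - c * t := by
    calc f * (f - c * t) = f * f - (f * c) * t := by noncomm_ring
    _ = f - c * t := by rw [hf, hfc]
  have hB1 : f - c * t = f * (1 - c * t) := by
    have : f * (1 - c * t) = f - (f * c) * t := by noncomm_ring
    rw [this, hfc]
  have hB2 : f - c * t = (1 - c * t) * f := by
    have : (1 - c * t) * f = f - c * (t * f) := by noncomm_ring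
    rw [this, htf]
  refine ⟨f * u * f, ?_, ?_, ?_, ?_⟩
  · calc (f * u * f) * (f - c * t) = (f * u) * (f * (f - c * t)) := by noncomm_ring
    _ = (f * u) * (f - c * t) := by rw [hA2]
    _ = (f * u) * ((1 - c * t) * f) := by rw [← hB2]
    _ = f * (u * (1 - c * t)) * f := by noncomm_ring
    _ = f := by rw [hu1, mul_one, hf]
  · calc (f - c * t) * (f * u * f) = ((f - c * t) * f) * (u * f) := by noncomm_ring
    _ = (f - c * t) * (u * f) := by rw [hA1]
    _ = (f * (1 - c * t)) * (u * f) := by rw [← hB1]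
    _ = f * ((1 - c * t) * u) * f := by noncomm_ring
    _ = f := by rw [hu2, mul_one, hf]
  · calc f * (f * u * f) = (f * f) * u * f := by noncomm_ring
    _ = f * u * f := by rw [hf]
  · calc (f * u * f) * f = f * u * (f * f) := by noncomm_ring
    _ = f * u * f := by rw [hf]


end JacHelpers


section GradedHelpers
variable {A : Type*} [Ring A] (𝒜 : ℤ → AddSubgroup A) [GradedRing 𝒜]

private lemma proj_mem (n : ℤ) (z : A) : GradedRing.proj 𝒜 n z ∈ 𝒜 n := by
  rw [GradedRing.proj_apply]; exact SetLike.coe_mem _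

private lemma proj_of_mem_same {m : ℤ} {x : A} (hx : x ∈ 𝒜 m) :
    GradedRing.proj 𝒜 m x = x := by
  rw [GradedRing.proj_apply]; exact DirectSum.decompose_of_mem_same 𝒜 hx

private lemma proj_of_mem_ne {m n : ℤ} {x : A} (hx : x ∈ 𝒜 m) (h : m ≠ n) :
    GradedRing.proj 𝒜 n x = 0 := by
  rw [GradedRing.proj_apply]; exact DirectSum.decompose_of_mem_ne 𝒜 hx h

private lemma proj_mul_left {x : A} {m : ℤ} (hx : x ∈ 𝒜 m) (z : A) (n n' : ℤ)
    (h : m + n' = n) : GradedRing.proj 𝒜 n (x * z) = x * GradedRing.proj 𝒜 n' z := by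
  classical
  subst h
  conv_lhs => rw [← DirectSum.sum_support_decompose 𝒜 z, Finset.mul_sum]
  rw [map_sum, Finset.sum_eq_single n']
  · have hmem : x * ↑(DirectSum.decompose 𝒜 z n') ∈ 𝒜 (m + n') :=
      SetLike.mul_mem_graded hx (SetLike.coe_mem _)
    rw [proj_of_mem_same 𝒜 hmem, GradedRing.proj_apply]
  · intro j _ hne
    have hmem : x * ↑(DirectSum.decompose 𝒜 z j) ∈ 𝒜 (m + j) :=
      SetLike.mul_mem_graded hx (SetLike.coe_mem _)
    exact proj_of_mem_ne 𝒜 hmem (by omega)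
  · intro hnot
    rw [DFinsupp.notMem_support_iff.mp hnot]
    simp

private lemma proj_mul_right {x : A} {m : ℤ} (hx : x ∈ 𝒜 m) (z : A) (n n' : ℤ)
    (h : n' + m = n) : GradedRing.proj 𝒜 n (z * x) = GradedRing.proj 𝒜 n' z * x := by
  classical
  subst h
  conv_lhs => rw [← DirectSum.sum_support_decompose 𝒜 z, Finset.sum_mul]
  rw [map_sum, Finset.sum_eq_single n']
  · have hmem : (↑(DirectSum.decompose 𝒜 z n') : A) * x ∈ 𝒜 (n' + m) :=
      SetLike.mul_mem_graded (SetLike.coe_mem _) hx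
    rw [proj_of_mem_same 𝒜 hmem, GradedRing.proj_apply]
  · intro j _ hne
    have hmem : (↑(DirectSum.decompose 𝒜 z j) : A) * x ∈ 𝒜 (j + m) :=
      SetLike.mul_mem_graded (SetLike.coe_mem _) hx
    exact proj_of_mem_ne 𝒜 hmem (by omega)
  · intro hnot
    rw [DFinsupp.notMem_support_iff.mp hnot]
    simp

private lemma proj_mul_expand [∀ (i : ℤ) (x : 𝒜 i), Decidable (x ≠ 0)] (u v : A) (n : ℤ) :
    GradedRing.proj 𝒜 n (u * v) =
      ∑ i ∈ (DirectSum.decompose 𝒜 u).support,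
        GradedRing.proj 𝒜 i u * GradedRing.proj 𝒜 (n - i) v := by
  conv_lhs => rw [← DirectSum.sum_support_decompose 𝒜 u, Finset.sum_mul]
  rw [map_sum]
  refine Finset.sum_congr rfl fun i _ => ?_
  rw [← GradedRing.proj_apply]
  exact proj_mul_left 𝒜 (proj_mem 𝒜 i u) v n (n - i) (by ring)

end GradedHelpers


/-- A unital ℤ-graded von Neumann regular ring has zero Jacobson radical. -/
theorem jacobson_radical_eq_bot_of_graded_regular
    {A : Type*} [Ring A] (𝒜 : ℤ → AddSubgroup A) [GradedRing 𝒜]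
    (hA : GradedVNRegular 𝒜) :
    Ideal.jacobson (⊥ : Ideal A) = ⊥ := by
  classical
  rw [eq_bot_iff]
  intro a₀ ha₀
  rw [Ideal.mem_bot]
  by_contra ha₀ne
  -- support membership helper
  have hsupp : ∀ (z : A) (j : ℤ),
      j ∈ (DirectSum.decompose 𝒜 z).support ↔ GradedRing.proj 𝒜 j z ≠ 0 := by
    intro z j
    rw [DFinsupp.mem_support_iff]
    constructor
    · intro h hc
      exact h (by rwa [GradedRing.proj_apply, ZeroMemClass.coe_eq_zero] at hc)
    · intro h hc
      exact h (by rw [GradedRing.proj_apply, hc, ZeroMemClass.coe_zero])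
  have hdecomp : ∀ z : A, z = ∑ j ∈ (DirectSum.decompose 𝒜 z).support, GradedRing.proj 𝒜 j z := by
    intro z
    conv_lhs => rw [← DirectSum.sum_support_decompose 𝒜 z]
    refine Finset.sum_congr rfl fun j _ => ?_
    rw [GradedRing.proj_apply]
  have hsupp_ne : ∀ z : A, z ≠ 0 → (DirectSum.decompose 𝒜 z).support.Nonempty := by
    intro z hz
    rw [Finset.nonempty_iff_ne_empty]
    intro h
    exact hz (by rw [hdecomp z, h, Finset.sum_empty])
  -- minimal support cardinality among nonzero elements of J
  have hex : ∃ n : ℕ, ∃ b : A, b ∈ Ideal.jacobson (⊥ : Ideal A) ∧ b ≠ 0 ∧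
      (DirectSum.decompose 𝒜 b).support.card = n :=
    ⟨_, a₀, ha₀, ha₀ne, rfl⟩
  obtain ⟨k, hkeq⟩ : ∃ k, k = Nat.find hex := ⟨_, rfl⟩
  obtain ⟨a, haJ, hane, hacard⟩ : ∃ b : A, b ∈ Ideal.jacobson (⊥ : Ideal A) ∧ b ≠ 0 ∧
      (DirectSum.decompose 𝒜 b).support.card = k := by
    rw [hkeq]; exact Nat.find_spec hex
  have hmin : ∀ b : A, b ∈ Ideal.jacobson (⊥ : Ideal A) →
      (DirectSum.decompose 𝒜 b).support.card < k → b = 0 := by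
    intro b hbJ hbcard
    by_contra hbne
    have := Nat.find_min' hex ⟨b, hbJ, hbne, rfl⟩
    omega
  -- lowest component of a
  have haS : (DirectSum.decompose 𝒜 a).support.Nonempty := hsupp_ne a hane
  obtain ⟨n₁, hn₁⟩ : ∃ n, n = (DirectSum.decompose 𝒜 a).support.min' haS := ⟨_, rfl⟩
  have hn₁min : ∀ j ∈ (DirectSum.decompose 𝒜 a).support, n₁ ≤ j := by
    intro j hj; rw [hn₁]; exact Finset.min'_le _ _ hj
  obtain ⟨x, hxeq⟩ : ∃ x, x = GradedRing.proj 𝒜 n₁ a := ⟨_, rfl⟩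
  have hx_mem : x ∈ 𝒜 n₁ := hxeq ▸ proj_mem 𝒜 n₁ a
  have hx_ne : x ≠ 0 := by
    rw [hxeq, ← hsupp a n₁, hn₁]
    exact Finset.min'_mem _ _
  -- homogeneous quasi-inverse
  obtain ⟨y₀, hy₀⟩ := hA n₁ x hx_mem
  obtain ⟨y₁, hy₁eq⟩ : ∃ y₁, y₁ = GradedRing.proj 𝒜 (-n₁) y₀ := ⟨_, rfl⟩
  have hy₁_mem : y₁ ∈ 𝒜 (-n₁) := hy₁eq ▸ proj_mem 𝒜 (-n₁) y₀
  have hy₁x : x * y₁ * x = x := by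
    have h1 := congrArg (GradedRing.proj 𝒜 n₁) hy₀
    rw [proj_mul_right 𝒜 hx_mem (x * y₀) n₁ 0 (by ring),
      proj_mul_left 𝒜 hx_mem y₀ 0 (-n₁) (by ring), proj_of_mem_same 𝒜 hx_mem, ← hy₁eq] at h1
    exact h1
  obtain ⟨y, hyeq⟩ : ∃ y, y = y₁ * x * y₁ := ⟨_, rfl⟩
  have hy_mem : y ∈ 𝒜 (-n₁) := by
    have h2 : y₁ * x * y₁ ∈ 𝒜 (-n₁ + n₁ + -n₁) :=
      SetLike.mul_mem_graded (SetLike.mul_mem_graded hy₁_mem hx_mem) hy₁_mem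
    have h3 : -n₁ + n₁ + -n₁ = -n₁ := by ring
    rw [h3] at h2
    rw [hyeq]
    exact h2
  have hyx : y * x = y₁ * x := by
    rw [hyeq, mul_assoc y₁ x y₁, mul_assoc y₁ (x * y₁) x, hy₁x]
  have hxyx : x * y * x = x := by
    rw [hyeq, show x * (y₁ * x * y₁) * x = x * y₁ * x * (y₁ * x) from by noncomm_ring,
      hy₁x, ← mul_assoc, hy₁x]
  have hyxy : y * x * y = y := by
    rw [hyx, hyeq, show y₁ * x * (y₁ * x * y₁) = y₁ * (x * y₁ * x) * y₁ from by noncomm_ring,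
      hy₁x]
  obtain ⟨f, hfeq⟩ : ∃ f, f = y * x := ⟨_, rfl⟩
  have hf_mem : f ∈ 𝒜 0 := by
    have h2 : y * x ∈ 𝒜 (-n₁ + n₁) := SetLike.mul_mem_graded hy_mem hx_mem
    have h3 : -n₁ + n₁ = 0 := by ring
    rw [h3] at h2
    rw [hfeq]; exact h2
  have hff : f * f = f := by
    rw [hfeq, show y * x * (y * x) = y * x * y * x from by noncomm_ring, hyxy]
  have hxf : x * f = x := by rw [hfeq, ← mul_assoc, hxyx]
  have hfy : f * y = y := by rw [hfeq, hyxy]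
  have hf_ne : f ≠ 0 := by
    intro h
    exact hx_ne (by rw [← hxf, h, mul_zero])
  -- a = a * f
  have haf : a * f = a := by
    have hsubJ : a - a * f ∈ Ideal.jacobson (⊥ : Ideal A) :=
      Submodule.sub_mem _ haJ (jac_mul_right haJ f)
    have hcomp : ∀ j : ℤ, GradedRing.proj 𝒜 j (a - a * f)
        = GradedRing.proj 𝒜 j a - GradedRing.proj 𝒜 j a * f := by
      intro j
      rw [map_sub, proj_mul_right 𝒜 hf_mem a j j (by ring)]
    have hn₁comp : GradedRing.proj 𝒜 n₁ (a - a * f) = 0 := by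
      rw [hcomp, ← hxeq, hxf, sub_self]
    have hsub2 : (DirectSum.decompose 𝒜 (a - a * f)).support ⊆
        (DirectSum.decompose 𝒜 a).support.erase n₁ := by
      intro j hj
      rw [hsupp] at hj
      rw [Finset.mem_erase]
      constructor
      · intro h; rw [h] at hj; exact hj hn₁comp
      · rw [hsupp]
        intro h
        exact hj (by rw [hcomp, h, zero_mul, sub_self])
    have hcard : (DirectSum.decompose 𝒜 (a - a * f)).support.card < k := by
      have h1 := Finset.card_le_card hsub2
      have h2 : ((DirectSum.decompose 𝒜 a).support.erase n₁).card
          = (DirectSum.decompose 𝒜 a).support.card - 1 := by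
        apply Finset.card_erase_of_mem
        rw [hn₁]; exact Finset.min'_mem _ _
      have h3 : 0 < (DirectSum.decompose 𝒜 a).support.card := Finset.card_pos.mpr haS
      omega
    have h4 : a - a * f = 0 := hmin _ hsubJ hcard
    exact (sub_eq_zero.mp h4).symm
  -- t := y * a
  obtain ⟨t, hteq⟩ : ∃ t, t = y * a := ⟨_, rfl⟩
  have htJ : t ∈ Ideal.jacobson (⊥ : Ideal A) := hteq ▸ Ideal.mul_mem_left _ y haJ
  have hπt : ∀ j : ℤ, GradedRing.proj 𝒜 j t = y * GradedRing.proj 𝒜 (j + n₁) a := by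
    intro j
    rw [hteq, proj_mul_left 𝒜 hy_mem a j (j + n₁) (by ring)]
  have hπ0t : GradedRing.proj 𝒜 0 t = f := by
    rw [hπt, zero_add, ← hxeq, ← hfeq]
  have ht_ne : t ≠ 0 := by
    intro h
    apply hf_ne
    rw [← hπ0t, h, map_zero]
  have hft : f * t = t := by rw [hteq, ← mul_assoc, hfy]
  have htf : t * f = t := by rw [hteq, mul_assoc, haf]
  -- support of t has exactly k elements, all nonnegative, containing 0
  have hStk : (DirectSum.decompose 𝒜 t).support.card = k := by
    have hsub : (DirectSum.decompose 𝒜 t).support ⊆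
        (DirectSum.decompose 𝒜 a).support.image (fun j => j - n₁) := by
      intro j hj
      rw [hsupp] at hj
      rw [Finset.mem_image]
      refine ⟨j + n₁, ?_, by ring⟩
      rw [hsupp]
      intro h
      exact hj (by rw [hπt, h, mul_zero])
    have h1 := Finset.card_le_card hsub
    have h2 : ((DirectSum.decompose 𝒜 a).support.image (fun j => j - n₁)).card
        = (DirectSum.decompose 𝒜 a).support.card :=
      Finset.card_image_of_injective _ (fun u v huv => by omega)
    have h3 : ¬ ((DirectSum.decompose 𝒜 t).support.card < k) := by
      intro h
      exact ht_ne (hmin _ htJ h)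
    omega
  have h0St : (0 : ℤ) ∈ (DirectSum.decompose 𝒜 t).support := by
    rw [hsupp, hπ0t]; exact hf_ne
  have hStnonneg : ∀ j ∈ (DirectSum.decompose 𝒜 t).support, 0 ≤ j := by
    intro j hj
    rw [hsupp] at hj
    have h5 : j + n₁ ∈ (DirectSum.decompose 𝒜 a).support := by
      rw [hsupp]
      intro h
      exact hj (by rw [hπt, h, mul_zero])
    have := hn₁min _ h5
    omega
  -- corner components of t
  have hfπt : ∀ j : ℤ, f * GradedRing.proj 𝒜 j t = GradedRing.proj 𝒜 j t := by
    intro j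
    have := congrArg (GradedRing.proj 𝒜 j) hft
    rwa [proj_mul_left 𝒜 hf_mem t j j (by ring)] at this
  have hπtf : ∀ j : ℤ, GradedRing.proj 𝒜 j t * f = GradedRing.proj 𝒜 j t := by
    intro j
    have := congrArg (GradedRing.proj 𝒜 j) htf
    rwa [proj_mul_right 𝒜 hf_mem t j j (by ring)] at this
  -- k = 1 is impossible
  have hk2 : 2 ≤ k := by
    by_contra h
    have hk1 : k = 1 := by
      have : 0 < k := by
        rw [← hStk]
        exact Finset.card_pos.mpr ⟨0, h0St⟩
      omega
    have hSt1 : (DirectSum.decompose 𝒜 t).support = {0} := by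
      apply Finset.eq_singleton_iff_unique_mem.mpr
      refine ⟨h0St, fun j hj => ?_⟩
      by_contra hne
      have h2 : ({0, j} : Finset ℤ) ⊆ (DirectSum.decompose 𝒜 t).support := by
        intro u hu
        rcases Finset.mem_insert.mp hu with h | h
        · rw [h]; exact h0St
        · rw [Finset.mem_singleton.mp h]; exact hj
      have h3 := Finset.card_le_card h2
      rw [Finset.card_insert_of_notMem (by simpa using (Ne.symm hne)),
        Finset.card_singleton] at h3
      omega
    have htft : t = f := by
      conv_lhs => rw [hdecomp t]
      rw [hSt1, Finset.sum_singleton, hπ0t]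
    obtain ⟨q, hq1, hq2, hq3, hq4⟩ := corner_inv htJ htf hff hff
    apply hf_ne
    have h6 : f = q * (f - f * t) := hq1.symm
    rw [htft, hff, sub_self, mul_zero] at h6
    exact h6
  -- every nonzero component of t is invertible in the corner ring fAf
  have hW : ∀ i ∈ (DirectSum.decompose 𝒜 t).support, ∃ w : A,
      w * GradedRing.proj 𝒜 i t = f ∧ GradedRing.proj 𝒜 i t * w = f ∧
        f * w = w ∧ w * f = w := by
    intro i hi
    have hti_mem : GradedRing.proj 𝒜 i t ∈ 𝒜 i := proj_mem 𝒜 i t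
    have hα : ∀ (g : ℤ) (c : A), c ∈ 𝒜 g → GradedRing.proj 𝒜 i t * c = 0 → f * c = 0 := by
      intro g c hcg htic
      by_contra hfc
      have htcJ : t * c ∈ Ideal.jacobson (⊥ : Ideal A) := jac_mul_right htJ c
      have hproj : ∀ m : ℤ, GradedRing.proj 𝒜 m (t * c) = GradedRing.proj 𝒜 (m - g) t * c :=
        fun m => proj_mul_right 𝒜 hcg t m (m - g) (by ring)
      have h0g : GradedRing.proj 𝒜 (0 + g) (t * c) = f * c := by
        rw [hproj, add_sub_cancel_right, hπ0t]
      have htc_ne : t * c ≠ 0 := by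
        intro h
        rw [h, map_zero] at h0g
        exact hfc h0g.symm
      have hsub : (DirectSum.decompose 𝒜 (t * c)).support ⊆
          (DirectSum.decompose 𝒜 t).support.image (fun j => j + g) := by
        intro m hm
        rw [hsupp] at hm
        rw [Finset.mem_image]
        refine ⟨m - g, ?_, by ring⟩
        rw [hsupp]
        intro h
        exact hm (by rw [hproj, h, zero_mul])
      have hkle : k ≤ (DirectSum.decompose 𝒜 (t * c)).support.card := by
        by_contra h
        exact htc_ne (hmin _ htcJ (by omega))
      have hcardim : ((DirectSum.decompose 𝒜 t).support.image (fun j => j + g)).card = k := by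
        rw [Finset.card_image_of_injective _ (fun u v huv => by omega), hStk]
      have heq : (DirectSum.decompose 𝒜 (t * c)).support
          = (DirectSum.decompose 𝒜 t).support.image (fun j => j + g) := by
        apply Finset.eq_of_subset_of_card_le hsub
        omega
      have himem : i + g ∈ (DirectSum.decompose 𝒜 (t * c)).support := by
        rw [heq, Finset.mem_image]
        exact ⟨i, hi, rfl⟩
      rw [hsupp] at himem
      apply himem
      rw [hproj, add_sub_cancel_right, htic]
    have hβ : ∀ (g : ℤ) (c : A), c ∈ 𝒜 g → c * GradedRing.proj 𝒜 i t = 0 → c * f = 0 := by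
      intro g c hcg hcti
      by_contra hcf
      have hctJ : c * t ∈ Ideal.jacobson (⊥ : Ideal A) := Ideal.mul_mem_left _ c htJ
      have hproj : ∀ m : ℤ, GradedRing.proj 𝒜 m (c * t) = c * GradedRing.proj 𝒜 (m - g) t :=
        fun m => proj_mul_left 𝒜 hcg t m (m - g) (by ring)
      have h0g : GradedRing.proj 𝒜 (0 + g) (c * t) = c * f := by
        rw [hproj, show (0:ℤ) + g - g = 0 from by ring, hπ0t]
      have htc_ne : c * t ≠ 0 := by
        intro h
        rw [h, map_zero] at h0g
        exact hcf h0g.symm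
      have hsub : (DirectSum.decompose 𝒜 (c * t)).support ⊆
          (DirectSum.decompose 𝒜 t).support.image (fun j => j + g) := by
        intro m hm
        rw [hsupp] at hm
        rw [Finset.mem_image]
        refine ⟨m - g, ?_, by ring⟩
        rw [hsupp]
        intro h
        exact hm (by rw [hproj, h, mul_zero])
      have hkle : k ≤ (DirectSum.decompose 𝒜 (c * t)).support.card := by
        by_contra h
        exact htc_ne (hmin _ hctJ (by omega))
      have hcardim : ((DirectSum.decompose 𝒜 t).support.image (fun j => j + g)).card = k := by
        rw [Finset.card_image_of_injective _ (fun u v huv => by omega), hStk]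
      have heq : (DirectSum.decompose 𝒜 (c * t)).support
          = (DirectSum.decompose 𝒜 t).support.image (fun j => j + g) := by
        apply Finset.eq_of_subset_of_card_le hsub
        omega
      have himem : i + g ∈ (DirectSum.decompose 𝒜 (c * t)).support := by
        rw [heq, Finset.mem_image]
        exact ⟨i, hi, rfl⟩
      rw [hsupp] at himem
      apply himem
      rw [hproj, add_sub_cancel_right, hcti]
    obtain ⟨z₀, hz₀⟩ := hA i (GradedRing.proj 𝒜 i t) hti_mem
    obtain ⟨zi, hzieq⟩ : ∃ z, z = GradedRing.proj 𝒜 (-i) z₀ := ⟨_, rfl⟩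
    have hzi_mem : zi ∈ 𝒜 (-i) := hzieq ▸ proj_mem 𝒜 (-i) z₀
    have hzi : GradedRing.proj 𝒜 i t * zi * GradedRing.proj 𝒜 i t = GradedRing.proj 𝒜 i t := by
      have h1 := congrArg (GradedRing.proj 𝒜 i) hz₀
      rw [proj_mul_right 𝒜 hti_mem _ i 0 (by ring),
        proj_mul_left 𝒜 hti_mem z₀ 0 (-i) (by ring), proj_of_mem_same 𝒜 hti_mem,
        ← hzieq] at h1
      exact h1
    have hf1L : f * (zi * GradedRing.proj 𝒜 i t) = f := by
      have hmem2 : zi * GradedRing.proj 𝒜 i t ∈ 𝒜 0 := by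
        have h2 : zi * GradedRing.proj 𝒜 i t ∈ 𝒜 (-i + i) :=
          SetLike.mul_mem_graded hzi_mem hti_mem
        rw [show -i + i = 0 from by ring] at h2
        exact h2
      have hc'mem : (1 : A) - zi * GradedRing.proj 𝒜 i t ∈ 𝒜 0 :=
        sub_mem (SetLike.one_mem_graded 𝒜) hmem2
      have htic' : GradedRing.proj 𝒜 i t * ((1 : A) - zi * GradedRing.proj 𝒜 i t) = 0 := by
        have h3 : GradedRing.proj 𝒜 i t * ((1 : A) - zi * GradedRing.proj 𝒜 i t)
            = GradedRing.proj 𝒜 i t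
              - GradedRing.proj 𝒜 i t * zi * GradedRing.proj 𝒜 i t := by noncomm_ring
        rw [h3, hzi, sub_self]
      have h4 := hα 0 _ hc'mem htic'
      rw [mul_sub, mul_one] at h4
      exact (sub_eq_zero.mp h4).symm
    have hf1R : GradedRing.proj 𝒜 i t * zi * f = f := by
      have hmem2 : GradedRing.proj 𝒜 i t * zi ∈ 𝒜 0 := by
        have h2 : GradedRing.proj 𝒜 i t * zi ∈ 𝒜 (i + -i) :=
          SetLike.mul_mem_graded hti_mem hzi_mem
        rw [show i + -i = 0 from by ring] at h2
        exact h2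
      have hc'mem : (1 : A) - GradedRing.proj 𝒜 i t * zi ∈ 𝒜 0 :=
        sub_mem (SetLike.one_mem_graded 𝒜) hmem2
      have htic' : ((1 : A) - GradedRing.proj 𝒜 i t * zi) * GradedRing.proj 𝒜 i t = 0 := by
        have h3 : ((1 : A) - GradedRing.proj 𝒜 i t * zi) * GradedRing.proj 𝒜 i t
            = GradedRing.proj 𝒜 i t
              - GradedRing.proj 𝒜 i t * zi * GradedRing.proj 𝒜 i t := by noncomm_ring
        rw [h3, hzi, sub_self]
      have h4 := hβ 0 _ hc'mem htic'
      rw [sub_mul, one_mul] at h4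
      exact (sub_eq_zero.mp h4).symm
    refine ⟨f * zi * f, ?_, ?_, ?_, ?_⟩
    · calc f * zi * f * GradedRing.proj 𝒜 i t
          = f * (zi * (f * GradedRing.proj 𝒜 i t)) := by noncomm_ring
      _ = f * (zi * GradedRing.proj 𝒜 i t) := by rw [hfπt]
      _ = f := hf1L
    · calc GradedRing.proj 𝒜 i t * (f * zi * f)
          = (GradedRing.proj 𝒜 i t * f) * zi * f := by noncomm_ring
      _ = GradedRing.proj 𝒜 i t * zi * f := by rw [hπtf]
      _ = f := hf1R
    · calc f * (f * zi * f) = (f * f) * zi * f := by noncomm_ring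
      _ = f * zi * f := by rw [hff]
    · calc (f * zi * f) * f = f * zi * (f * f) := by noncomm_ring
      _ = f * zi * f := by rw [hff]
  -- the element s = t - f and its corner inverse Q
  obtain ⟨s, hseq⟩ : ∃ s, s = t - f := ⟨_, rfl⟩
  have hπs : ∀ j : ℤ, j ≠ 0 → GradedRing.proj 𝒜 j s = GradedRing.proj 𝒜 j t := by
    intro j hj
    rw [hseq, map_sub, proj_of_mem_ne 𝒜 hf_mem (Ne.symm hj), sub_zero]
  have hπ0s : GradedRing.proj 𝒜 0 s = 0 := by
    rw [hseq, map_sub, proj_of_mem_same 𝒜 hf_mem, hπ0t, sub_self]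
  have hSs : (DirectSum.decompose 𝒜 s).support
      = (DirectSum.decompose 𝒜 t).support.erase 0 := by
    ext j
    rw [hsupp, Finset.mem_erase, hsupp]
    by_cases hj : j = 0
    · subst hj
      simp [hπ0s]
    · rw [hπs j hj]
      simp [hj]
  have hSsne : (DirectSum.decompose 𝒜 s).support.Nonempty := by
    rw [← Finset.card_pos, hSs, Finset.card_erase_of_mem h0St, hStk]
    omega
  obtain ⟨c₁, hc₁eq⟩ : ∃ c, c = (DirectSum.decompose 𝒜 s).support.min' hSsne := ⟨_, rfl⟩
  obtain ⟨ctop, hctopeq⟩ : ∃ c, c = (DirectSum.decompose 𝒜 s).support.max' hSsne := ⟨_, rfl⟩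
  have hc₁mem : c₁ ∈ (DirectSum.decompose 𝒜 s).support := hc₁eq ▸ Finset.min'_mem _ _
  have hctopmem : ctop ∈ (DirectSum.decompose 𝒜 s).support := hctopeq ▸ Finset.max'_mem _ _
  have hc₁min : ∀ j ∈ (DirectSum.decompose 𝒜 s).support, c₁ ≤ j := by
    intro j hj; rw [hc₁eq]; exact Finset.min'_le _ _ hj
  have hctopmax : ∀ j ∈ (DirectSum.decompose 𝒜 s).support, j ≤ ctop := by
    intro j hj; rw [hctopeq]; exact Finset.le_max' _ _ hj
  have hc₁St : c₁ ∈ (DirectSum.decompose 𝒜 t).support :=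
    (Finset.mem_erase.mp (hSs ▸ hc₁mem)).2
  have hc₁ne0 : c₁ ≠ 0 := (Finset.mem_erase.mp (hSs ▸ hc₁mem)).1
  have hctopSt : ctop ∈ (DirectSum.decompose 𝒜 t).support :=
    (Finset.mem_erase.mp (hSs ▸ hctopmem)).2
  have hctopne0 : ctop ≠ 0 := (Finset.mem_erase.mp (hSs ▸ hctopmem)).1
  have hc₁pos : 0 < c₁ := lt_of_le_of_ne (hStnonneg _ hc₁St) (Ne.symm hc₁ne0)
  obtain ⟨w1, hw1t, htw1, hfw1, hw1f⟩ := hW c₁ hc₁St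
  obtain ⟨wt, hwtt, htwt, hfwt, hwtf⟩ := hW ctop hctopSt
  obtain ⟨q0, hq01, hq02, hq03, hq04⟩ := corner_inv htJ htf hff hff
  have hffts : f - f * t = -s := by
    rw [hft, hseq]; exact (neg_sub t f).symm
  obtain ⟨Q, hQeq⟩ : ∃ Q, Q = -q0 := ⟨_, rfl⟩
  have hsQ : s * Q = f := by
    rw [hQeq, mul_neg, ← neg_mul, ← hffts, hq02]
  have hQs : Q * s = f := by
    rw [hQeq, neg_mul, ← mul_neg, ← hffts, hq01]
  have hfQ : f * Q = Q := by rw [hQeq, mul_neg, hq03]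
  have hQf : Q * f = Q := by rw [hQeq, neg_mul, hq04]
  have hQne : Q ≠ 0 := by
    intro h
    rw [h, mul_zero] at hsQ
    exact hf_ne hsQ.symm
  have hfπQ : ∀ j : ℤ, f * GradedRing.proj 𝒜 j Q = GradedRing.proj 𝒜 j Q := by
    intro j
    have := congrArg (GradedRing.proj 𝒜 j) hfQ
    rwa [proj_mul_left 𝒜 hf_mem Q j j (by ring)] at this
  have hSQne : (DirectSum.decompose 𝒜 Q).support.Nonempty := hsupp_ne Q hQne
  obtain ⟨α, hαeq⟩ : ∃ c, c = (DirectSum.decompose 𝒜 Q).support.min' hSQne := ⟨_, rfl⟩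
  obtain ⟨β, hβeq⟩ : ∃ c, c = (DirectSum.decompose 𝒜 Q).support.max' hSQne := ⟨_, rfl⟩
  have hαmem : α ∈ (DirectSum.decompose 𝒜 Q).support := hαeq ▸ Finset.min'_mem _ _
  have hβmem : β ∈ (DirectSum.decompose 𝒜 Q).support := hβeq ▸ Finset.max'_mem _ _
  have hαmin : ∀ j ∈ (DirectSum.decompose 𝒜 Q).support, α ≤ j := by
    intro j hj; rw [hαeq]; exact Finset.min'_le _ _ hj
  have hβmax : ∀ j ∈ (DirectSum.decompose 𝒜 Q).support, j ≤ β := by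
    intro j hj; rw [hβeq]; exact Finset.le_max' _ _ hj
  have hαβ : α ≤ β := hβmax _ hαmem
  have hQbelow : ∀ j : ℤ, j < α → GradedRing.proj 𝒜 j Q = 0 := by
    intro j hj
    by_contra h
    have := hαmin j ((hsupp Q j).mpr h)
    omega
  have hQabove : ∀ j : ℤ, β < j → GradedRing.proj 𝒜 j Q = 0 := by
    intro j hj
    by_contra h
    have := hβmax j ((hsupp Q j).mpr h)
    omega
  have hlow : GradedRing.proj 𝒜 (c₁ + α) (s * Q)
      = GradedRing.proj 𝒜 c₁ t * GradedRing.proj 𝒜 α Q := by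
    rw [proj_mul_expand 𝒜 s Q (c₁ + α), Finset.sum_eq_single_of_mem c₁ hc₁mem]
    · rw [hπs c₁ hc₁ne0, show c₁ + α - c₁ = α from by ring]
    · intro j hj hne
      have h1 : c₁ < j := lt_of_le_of_ne (hc₁min j hj) (Ne.symm hne)
      rw [hQbelow (c₁ + α - j) (by omega), mul_zero]
  have hlowne : GradedRing.proj 𝒜 c₁ t * GradedRing.proj 𝒜 α Q ≠ 0 := by
    intro h
    have h2 : w1 * (GradedRing.proj 𝒜 c₁ t * GradedRing.proj 𝒜 α Q) = w1 * 0 := by rw [h]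
    rw [mul_zero, ← mul_assoc, hw1t, hfπQ] at h2
    exact (hsupp Q α).mp hαmem h2
  have hc₁α : c₁ + α = 0 := by
    by_contra h
    apply hlowne
    rw [← hlow, hsQ]
    exact proj_of_mem_ne 𝒜 hf_mem (fun h0 => h h0.symm)
  have hhigh : GradedRing.proj 𝒜 (ctop + β) (s * Q)
      = GradedRing.proj 𝒜 ctop t * GradedRing.proj 𝒜 β Q := by
    rw [proj_mul_expand 𝒜 s Q (ctop + β), Finset.sum_eq_single_of_mem ctop hctopmem]
    · rw [hπs ctop hctopne0, show ctop + β - ctop = β from by ring]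
    · intro j hj hne
      have h1 : j < ctop := lt_of_le_of_ne (hctopmax j hj) hne
      rw [hQabove (ctop + β - j) (by omega), mul_zero]
  have hhighne : GradedRing.proj 𝒜 ctop t * GradedRing.proj 𝒜 β Q ≠ 0 := by
    intro h
    have h2 : wt * (GradedRing.proj 𝒜 ctop t * GradedRing.proj 𝒜 β Q) = wt * 0 := by rw [h]
    rw [mul_zero, ← mul_assoc, hwtt, hfπQ] at h2
    exact (hsupp Q β).mp hβmem h2
  have hctopβ : ctop + β = 0 := by
    by_contra h
    apply hhighne
    rw [← hhigh, hsQ]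
    exact proj_of_mem_ne 𝒜 hf_mem (fun h0 => h h0.symm)
  have hc₁top : c₁ = ctop := by
    have h1 : c₁ ≤ ctop := hc₁min _ hctopmem
    omega
  have hSssing : (DirectSum.decompose 𝒜 s).support = {c₁} := by
    apply Finset.eq_singleton_iff_unique_mem.mpr
    refine ⟨hc₁mem, fun j hj => ?_⟩
    have h1 := hc₁min j hj
    have h2 := hctopmax j hj
    omega
  have hSteq : (DirectSum.decompose 𝒜 t).support = {0, c₁} := by
    have h1 : (DirectSum.decompose 𝒜 t).support
        = insert 0 ((DirectSum.decompose 𝒜 t).support.erase 0) :=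
      (Finset.insert_erase h0St).symm
    rw [h1, ← hSs, hSssing]
  have hteq2 : t = f + GradedRing.proj 𝒜 c₁ t := by
    conv_lhs => rw [hdecomp t]
    rw [hSteq, Finset.sum_insert (Finset.notMem_singleton.mpr (Ne.symm hc₁ne0)),
      Finset.sum_singleton, hπ0t]
  -- endgame: the corner inverse of f + t₁ + t₁² forces infinite support
  obtain ⟨t₁, ht₁eq⟩ : ∃ u, u = GradedRing.proj 𝒜 c₁ t := ⟨_, rfl⟩
  have ht₁mem : t₁ ∈ 𝒜 c₁ := ht₁eq ▸ proj_mem 𝒜 c₁ t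
  have hft₁ : f * t₁ = t₁ := by rw [ht₁eq]; exact hfπt c₁
  have ht₁f : t₁ * f = t₁ := by rw [ht₁eq]; exact hπtf c₁
  have hw1t₁ : w1 * t₁ = f := by rw [ht₁eq]; exact hw1t
  have hteq3 : t = f + t₁ := by rw [ht₁eq]; exact hteq2
  have hfm : f * (-t₁) = -t₁ := by rw [mul_neg, hft₁]
  obtain ⟨q, hqA, hqB, hqC, hqD⟩ := corner_inv htJ htf hfm hff
  have hh : f - (-t₁) * t = f + t₁ + t₁ * t₁ := by
    rw [hteq3]
    have h1 : f - (-t₁) * (f + t₁) = f + t₁ * f + t₁ * t₁ := by noncomm_ring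
    rw [h1, ht₁f]
  have hhq : (f + t₁ + t₁ * t₁) * q = f := by rw [← hh]; exact hqB
  have hcube : (t₁ - f) * (f + t₁ + t₁ * t₁) = t₁ * t₁ * t₁ - f := by
    calc (t₁ - f) * (f + t₁ + t₁ * t₁)
        = t₁ * f + t₁ * t₁ + t₁ * (t₁ * t₁) - f * f - f * t₁ - f * t₁ * t₁ := by
          noncomm_ring
    _ = t₁ * t₁ * t₁ - f := by rw [ht₁f, hff, hft₁]; noncomm_ring
  have hE : t₁ * t₁ * t₁ * q - q = t₁ - f := by
    have h2 : (t₁ * t₁ * t₁ - f) * q = t₁ - f := by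
      calc (t₁ * t₁ * t₁ - f) * q = (t₁ - f) * ((f + t₁ + t₁ * t₁) * q) := by
            rw [← hcube]; noncomm_ring
      _ = (t₁ - f) * f := by rw [hhq]
      _ = t₁ - f := by rw [sub_mul, ht₁f, hff]
    calc t₁ * t₁ * t₁ * q - q = (t₁ * t₁ * t₁ - f) * q + (f * q - q) := by noncomm_ring
    _ = (t₁ - f) + (q - q) := by rw [h2, hqC]
    _ = t₁ - f := by rw [sub_self, add_zero]
  obtain ⟨D, hD⟩ : ∃ D, D = c₁ + c₁ + c₁ := ⟨_, rfl⟩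
  have hDpos : 0 < D := by omega
  have hDc₁ : c₁ < D := by omega
  have ht13mem : t₁ * t₁ * t₁ ∈ 𝒜 D := by
    rw [hD]
    exact SetLike.mul_mem_graded (SetLike.mul_mem_graded ht₁mem ht₁mem) ht₁mem
  have hfπq : ∀ j : ℤ, f * GradedRing.proj 𝒜 j q = GradedRing.proj 𝒜 j q := by
    intro j
    have := congrArg (GradedRing.proj 𝒜 j) hqC
    rwa [proj_mul_left 𝒜 hf_mem q j j (by ring)] at this
  have hEj : ∀ j : ℤ, t₁ * t₁ * t₁ * GradedRing.proj 𝒜 (j - D) q - GradedRing.proj 𝒜 j q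
      = (if j = c₁ then t₁ else 0) - (if j = 0 then f else 0) := by
    intro j
    have h1 := congrArg (GradedRing.proj 𝒜 j) hE
    rw [map_sub, map_sub, proj_mul_left 𝒜 ht13mem q j (j - D) (by ring)] at h1
    rw [h1]
    congr 1
    · split
      · next h => rw [h]; exact proj_of_mem_same 𝒜 ht₁mem
      · next h => exact proj_of_mem_ne 𝒜 ht₁mem (fun hc => h hc.symm)
    · split
      · next h => rw [h]; exact proj_of_mem_same 𝒜 hf_mem
      · next h => exact proj_of_mem_ne 𝒜 hf_mem (fun hc => h hc.symm)
  have hcancel : ∀ X : A, f * X = X → t₁ * t₁ * t₁ * X = 0 → X = 0 := by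
    intro X hfX h3
    have hstep : ∀ Z : A, t₁ * Z = 0 → Z = f * Z → Z = 0 := by
      intro Z h4 h5
      rw [h5, ← hw1t₁, mul_assoc, h4, mul_zero]
    have e1 : t₁ * (t₁ * (t₁ * X)) = 0 := by
      rw [show t₁ * (t₁ * (t₁ * X)) = t₁ * t₁ * t₁ * X from by noncomm_ring, h3]
    have e2 : t₁ * (t₁ * X) = 0 := by
      apply hstep _ e1
      conv_rhs => rw [← mul_assoc, hft₁]
    have e3 : t₁ * X = 0 := by
      apply hstep _ e2
      conv_rhs => rw [← mul_assoc, hft₁]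
    exact hstep X e3 hfX.symm
  -- q is nonzero in both cases below; support bounds give the contradiction
  have hcast : ∀ n : ℕ, (0 : ℤ) ≤ (n : ℤ) := fun n => Int.natCast_nonneg n
  have hprod : ∀ n : ℕ, 0 < D * ((n : ℤ) + 1) := by
    intro n
    have := hcast n
    have h1 : (0 : ℤ) < (n : ℤ) + 1 := by linarith only [this]
    exact mul_pos hDpos h1
  have hge : ∀ n : ℕ, D ≤ D * ((n : ℤ) + 1) := by
    intro n
    have h1 : (1 : ℤ) ≤ (n : ℤ) + 1 := by linarith only [hcast n]
    exact le_mul_of_one_le_right hDpos.le h1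
  have hge2 : ∀ n : ℕ, ((n : ℤ) + 1) ≤ D * ((n : ℤ) + 1) := by
    intro n
    have h0 : (0 : ℤ) ≤ (n : ℤ) + 1 := by linarith only [hcast n]
    have h1 : (1 : ℤ) ≤ D := hDpos
    exact le_mul_of_one_le_left h0 h1
  by_cases hq0 : GradedRing.proj 𝒜 0 q = 0
  · -- downward infinite chain
    have hbase : t₁ * t₁ * t₁ * GradedRing.proj 𝒜 (-D) q = -f := by
      have h1 := hEj 0
      rw [if_neg (Ne.symm hc₁ne0), if_pos rfl, hq0, sub_zero, zero_sub, zero_sub] at h1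
      exact h1
    have hchain : ∀ n : ℕ, GradedRing.proj 𝒜 (-(D * ((n : ℤ) + 1))) q ≠ 0 := by
      intro n
      induction n with
      | zero =>
        intro h
        rw [show -(D * (((0 : ℕ) : ℤ) + 1)) = -D from by push_cast; ring] at h
        rw [h, mul_zero] at hbase
        exact hf_ne (neg_eq_zero.mp hbase.symm)
      | succ n ih =>
        intro h
        apply ih
        have h1 := hEj (-(D * ((n : ℤ) + 1)))
        rw [if_neg (by intro hc; linarith only [hprod n, hc₁pos, hc]),
          if_neg (by intro hc; linarith only [hprod n, hc]), sub_zero,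
          show -(D * ((n : ℤ) + 1)) - D = -(D * (((n + 1 : ℕ) : ℤ) + 1)) from by
            push_cast; ring, h, mul_zero, zero_sub, neg_eq_zero] at h1
        exact h1
    have hSqne : (DirectSum.decompose 𝒜 q).support.Nonempty := by
      refine ⟨-(D * (((0 : ℕ) : ℤ) + 1)), ?_⟩
      rw [hsupp]
      exact hchain 0
    have hmle : ∀ j ∈ (DirectSum.decompose 𝒜 q).support,
        (DirectSum.decompose 𝒜 q).support.min' hSqne ≤ j := fun j hj =>
      Finset.min'_le _ _ hj
    obtain ⟨m, hmeq⟩ : ∃ m, m = (DirectSum.decompose 𝒜 q).support.min' hSqne := ⟨_, rfl⟩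
    have hn : GradedRing.proj 𝒜 (-(D * ((((-m).toNat : ℕ) : ℤ) + 1))) q ≠ 0 :=
      hchain (-m).toNat
    have hmem2 : -(D * ((((-m).toNat : ℕ) : ℤ) + 1)) ∈ (DirectSum.decompose 𝒜 q).support :=
      (hsupp _ _).mpr hn
    have h5 : m ≤ -(D * ((((-m).toNat : ℕ) : ℤ) + 1)) :=
      le_of_eq_of_le hmeq (hmle _ hmem2)
    have h6 : -m ≤ ((-m).toNat : ℤ) := Int.self_le_toNat _
    have h7 := hge2 (-m).toNat
    linarith only [h5, h6, h7]
  · -- upward infinite chain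
    have hchain : ∀ n : ℕ, GradedRing.proj 𝒜 (D * (n : ℤ)) q ≠ 0 := by
      intro n
      induction n with
      | zero =>
        rw [show D * (((0 : ℕ) : ℤ)) = 0 from by push_cast; ring]
        exact hq0
      | succ n ih =>
        intro h
        apply ih
        have h1 := hEj (D * (((n + 1 : ℕ) : ℤ)))
        rw [if_neg (by intro hc; push_cast at hc; linarith only [hge n, hDc₁, hc]),
          if_neg (by intro hc; push_cast at hc; linarith only [hge n, hDpos, hc]), sub_zero,
          show D * (((n + 1 : ℕ) : ℤ)) - D = D * (n : ℤ) from by push_cast; ring, h,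
          sub_zero] at h1
        exact hcancel _ (hfπq _) h1
    have hSqne : (DirectSum.decompose 𝒜 q).support.Nonempty := by
      refine ⟨D * ((0 : ℕ) : ℤ), ?_⟩
      rw [hsupp]
      exact hchain 0
    have hMle : ∀ j ∈ (DirectSum.decompose 𝒜 q).support,
        j ≤ (DirectSum.decompose 𝒜 q).support.max' hSqne := fun j hj =>
      Finset.le_max' _ _ hj
    obtain ⟨M, hMeq⟩ : ∃ M, M = (DirectSum.decompose 𝒜 q).support.max' hSqne := ⟨_, rfl⟩
    have hn : GradedRing.proj 𝒜 (D * (((M.toNat + 1 : ℕ) : ℤ))) q ≠ 0 := hchain (M.toNat + 1)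
    have hmem2 : D * (((M.toNat + 1 : ℕ) : ℤ)) ∈ (DirectSum.decompose 𝒜 q).support :=
      (hsupp _ _).mpr hn
    have h5 : D * (((M.toNat + 1 : ℕ) : ℤ)) ≤ M :=
      le_of_le_of_eq (hMle _ hmem2) hMeq.symm
    have h6 : M ≤ (M.toNat : ℤ) := Int.self_le_toNat _
    have h7 := hge2 M.toNat
    have h8 : D * (((M.toNat + 1 : ℕ) : ℤ)) = D * ((M.toNat : ℤ) + 1) := by push_cast; ring
    rw [h8] at h5
    linarith only [h5, h6, h7]
end

section
/- Let A be a unital Γ-graded ring and let e_1, …, e_n be pairwise orthogonal idempotents lying in A_0 such that e_1 + ⋯ + e_n = 1. Then A is graded von Neumann regular if and only if for all indices i, j, every γ ∈ Γ, and every x ∈ e_i·A_γ·e_j, there exists y ∈ e_j·A·e_i (which may be taken homogeneous) such that x*y*x = x. -/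
/-- If a homogeneous element `x ∈ 𝒜 γ` has an inner inverse `y`, then the
degree `-γ` component of `y` is also an inner inverse of `x`. -/
lemma homog_proj_sandwich {Γ : Type*} [AddCommGroup Γ] [DecidableEq Γ]
    {A : Type*} [Ring A] (𝒜 : Γ → AddSubgroup A) [GradedRing 𝒜]
    {γ : Γ} {x y : A} (hx : x ∈ 𝒜 γ) (h : x * y * x = x) :
    x * (DirectSum.decompose 𝒜 y (-γ) : A) * x = x := by
  have h2 : (DirectSum.decompose 𝒜 (y * x) (-γ + γ) : A)
      = (DirectSum.decompose 𝒜 y (-γ) : A) * x :=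
    DirectSum.coe_decompose_mul_add_of_right_mem 𝒜 hx
  have h1 : (DirectSum.decompose 𝒜 (x * (y * x)) (γ + (-γ + γ)) : A)
      = x * (DirectSum.decompose 𝒜 (y * x) (-γ + γ) : A) :=
    DirectSum.coe_decompose_mul_add_of_left_mem 𝒜 hx
  rw [h2] at h1
  have he : γ + (-γ + γ) = γ := by abel
  rw [he, ← mul_assoc, h, DirectSum.decompose_of_mem_same 𝒜 hx] at h1
  rw [← mul_assoc] at h1
  exact h1.symm

/-- Given a complete family of orthogonal degree-zero idempotents `e 1, …, e n`
with `e 1 + ⋯ + e n = 1`, the graded ring `A` is graded von Neumann regular iff for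
all `i, j` every homogeneous `x ∈ eᵢ A_γ eⱼ` has an inner inverse `y ∈ eⱼ A eᵢ`. -/
theorem graded_regular_iff_corner_pieces
    {Γ : Type*} [AddCommGroup Γ] [DecidableEq Γ]
    {A : Type*} [Ring A] (𝒜 : Γ → AddSubgroup A) [GradedRing 𝒜]
    (n : ℕ) (e : Fin n → A)
    (he0 : ∀ i, e i ∈ 𝒜 0)
    (heidem : ∀ i, e i * e i = e i)
    (horth : ∀ i j, i ≠ j → e i * e j = 0)
    (hsum : ∑ i, e i = 1) :
    GradedVNRegular 𝒜 ↔
      ∀ (i j : Fin n) (γ : Γ), ∀ x ∈ 𝒜 γ, e i * x * e j = x →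
        ∃ y : A, e j * y * e i = y ∧ x * y * x = x := by
  constructor
  · intro hreg i j γ x hx hsand
    obtain ⟨y, hy⟩ := hreg γ x hx
    have hxe : x * e j = x := by
      conv_lhs => rw [← hsand]
      rw [mul_assoc, heidem]
      exact hsand
    have hex : e i * x = x := by
      conv_lhs => rw [← hsand]
      rw [← mul_assoc, ← mul_assoc, heidem]
      exact hsand
    refine ⟨e j * y * e i, ?_, ?_⟩
    · calc e j * (e j * y * e i) * e i = (e j * e j) * y * (e i * e i) := by
            noncomm_ring
        _ = e j * y * e i := by rw [heidem, heidem]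
    · calc x * (e j * y * e i) * x = (x * e j) * y * (e i * x) := by noncomm_ring
        _ = x * y * x := by rw [hxe, hex]
        _ = x := hy
  · intro H
    -- partial sums of the idempotents
    set h : ℕ → A := fun m => ∑ i ∈ Finset.univ.filter (fun i : Fin n => (i : ℕ) < m), e i
      with hh_def
    have hm_eq : ∀ m : ℕ,
        h m = ∑ i ∈ Finset.univ.filter (fun i : Fin n => (i : ℕ) < m), e i := fun m => by
      rw [hh_def]
    have hh0 : h 0 = 0 := by rw [hm_eq]; simp
    have hhn : h n = 1 := by
      rw [hm_eq, Finset.filter_true_of_mem (fun i _ => i.isLt), hsum]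
    have hhmem : ∀ m, h m ∈ 𝒜 0 := by
      intro m; rw [hm_eq]; exact sum_mem fun i _ => he0 i
    have he_h0 : ∀ (i : Fin n) (m : ℕ), m ≤ (i : ℕ) → e i * h m = 0 := by
      intro i m him
      rw [hm_eq, Finset.mul_sum]
      refine Finset.sum_eq_zero fun j hj => ?_
      simp only [Finset.mem_filter, Finset.mem_univ, true_and] at hj
      exact horth i j (by intro hij; rw [hij] at him; omega)
    have hh_e0 : ∀ (i : Fin n) (m : ℕ), m ≤ (i : ℕ) → h m * e i = 0 := by
      intro i m him
      rw [hm_eq, Finset.sum_mul]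
      refine Finset.sum_eq_zero fun j hj => ?_
      simp only [Finset.mem_filter, Finset.mem_univ, true_and] at hj
      exact horth j i (by intro hij; rw [← hij] at him; omega)
    have he_h : ∀ (i : Fin n) (m : ℕ), (i : ℕ) < m → e i * h m = e i := by
      intro i m him
      rw [hm_eq, Finset.mul_sum]
      rw [Finset.sum_eq_single i]
      · exact heidem i
      · exact fun j _ hji => horth i j fun hij => hji hij.symm
      · intro hni
        exact absurd (Finset.mem_filter.mpr ⟨Finset.mem_univ i, him⟩) hni
    have hhm_idem : ∀ m : ℕ, h m * h m = h m := by
      intro m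
      nth_rewrite 1 [hm_eq m]
      rw [Finset.sum_mul]
      have : ∀ i ∈ Finset.univ.filter (fun i : Fin n => (i : ℕ) < m),
          e i * h m = e i := by
        intro i hi
        simp only [Finset.mem_filter, Finset.mem_univ, true_and] at hi
        exact he_h i m hi
      rw [Finset.sum_congr rfl this, ← hm_eq]
    have hsucc : ∀ (m : ℕ) (hm : m < n), h (m + 1) = e ⟨m, hm⟩ + h m := by
      intro m hm
      have hins : Finset.univ.filter (fun i : Fin n => (i : ℕ) < m + 1)
          = insert ⟨m, hm⟩ (Finset.univ.filter (fun i : Fin n => (i : ℕ) < m)) := by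
        ext i
        simp only [Finset.mem_filter, Finset.mem_univ, true_and, Finset.mem_insert,
          Fin.ext_iff]
        omega
      rw [hm_eq, hm_eq, hins, Finset.sum_insert (by simp)]
    have hstable : ∀ m : ℕ, n ≤ m → h (m + 1) = h m := by
      intro m hnm
      rw [hm_eq, hm_eq]
      congr 1
      ext i
      simp only [Finset.mem_filter, Finset.mem_univ, true_and]
      have := i.isLt
      omega
    -- Lemma B: homogeneous "columns" supported in the first m rows are regular
    have lemB : ∀ m : ℕ, ∀ γ : Γ, ∀ c ∈ 𝒜 γ, ∀ j : Fin n,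
        c * e j = c → h m * c = c → ∃ y : A, c * y * c = c := by
      intro m
      induction m with
      | zero =>
        intro γ c _ j _ hhc
        rw [hh0, zero_mul] at hhc
        exact ⟨0, by rw [← hhc]; simp⟩
      | succ m ih =>
        intro γ c hc j hcj hhc
        by_cases hm : m < n
        · have hsp : c = e ⟨m, hm⟩ * c + h m * c := by
            conv_lhs => rw [← hhc]
            rw [hsucc m hm, add_mul]
          set a := e ⟨m, hm⟩ * c with ha_def
          set b := h m * c with hb_def
          have hma : e ⟨m, hm⟩ * a = a := by rw [ha_def, ← mul_assoc, heidem]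
          have haj : a * e j = a := by rw [ha_def, mul_assoc, hcj]
          have ha_mem : a ∈ 𝒜 γ :=
            (zero_add γ) ▸ SetLike.mul_mem_graded (he0 ⟨m, hm⟩) hc
          obtain ⟨y, _, hy2⟩ := H ⟨m, hm⟩ j γ a ha_mem (by rw [hma, haj])
          set y₀ : A := (DirectSum.decompose 𝒜 y (-γ) : A) with hy₀def
          have hy₀mem : y₀ ∈ 𝒜 (-γ) := SetLike.coe_mem _
          have hy₀a : a * y₀ * a = a := homog_proj_sandwich 𝒜 ha_mem hy2
          set y₁ := e j * y₀ * e ⟨m, hm⟩ with hy₁def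
          have hy₁mem : y₁ ∈ 𝒜 (-γ) := by
            have h1 := SetLike.mul_mem_graded
              (SetLike.mul_mem_graded (he0 j) hy₀mem) (he0 ⟨m, hm⟩)
            have h2 : (0 : Γ) + -γ + 0 = -γ := by abel
            exact h2 ▸ h1
          have haya : a * y₁ * a = a := by
            calc a * y₁ * a = (a * e j) * y₀ * (e ⟨m, hm⟩ * a) := by
                  rw [hy₁def]; noncomm_ring
              _ = a * y₀ * a := by rw [haj, hma]
              _ = a := hy₀a
          have hy₁h : y₁ * h m = 0 := by
            rw [hy₁def, mul_assoc, he_h0 ⟨m, hm⟩ m le_rfl, mul_zero]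
          have hy₁b : y₁ * b = 0 := by
            rw [hb_def, ← mul_assoc, hy₁h, zero_mul]
          have hy₁c : y₁ * c = y₁ * a := by
            conv_lhs => rw [hsp]
            rw [mul_add, hy₁b, add_zero]
          have hct : c * y₁ * c = a + b * y₁ * a := by
            rw [mul_assoc, hy₁c]
            conv_lhs => rw [hsp]
            rw [add_mul, ← mul_assoc a y₁ a, haya, ← mul_assoc b y₁ a]
          have hc'2 : c - c * y₁ * c = b - b * y₁ * a := by
            rw [hct]
            conv_lhs => rw [hsp]
            abel
          have hc'mem : c - c * y₁ * c ∈ 𝒜 γ := by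
            refine sub_mem hc ?_
            have h1 := SetLike.mul_mem_graded (SetLike.mul_mem_graded hc hy₁mem) hc
            have h2 : γ + -γ + γ = γ := by abel
            exact h2 ▸ h1
          have hc'j : (c - c * y₁ * c) * e j = c - c * y₁ * c := by
            rw [sub_mul, hcj, mul_assoc (c * y₁) c (e j), hcj]
          have hb2 : h m * b = b := by rw [hb_def, ← mul_assoc, hhm_idem]
          have hc'h : h m * (c - c * y₁ * c) = c - c * y₁ * c := by
            rw [hc'2, mul_sub, ← mul_assoc (h m) (b * y₁) a, ← mul_assoc (h m) b y₁, hb2]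
          obtain ⟨z, hz⟩ := ih γ (c - c * y₁ * c) hc'mem j hc'j hc'h
          refine ⟨y₁ + (1 - y₁ * c) * z * (1 - c * y₁), ?_⟩
          have expand : c * (y₁ + (1 - y₁ * c) * z * (1 - c * y₁)) * c
              = c * y₁ * c + (c - c * y₁ * c) * z * (c - c * y₁ * c) := by
            noncomm_ring
          rw [expand, hz]
          abel
        · have hfe : h (m + 1) = h m := hstable m (by omega)
          exact ih γ c hc j hcj (by rw [← hfe]; exact hhc)
    -- Lemma C: homogeneous elements supported in the first m columns are regular
    have lemC : ∀ m : ℕ, ∀ γ : Γ, ∀ x ∈ 𝒜 γ, x * h m = x → ∃ y : A, x * y * x = x := by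
      intro m
      induction m with
      | zero =>
        intro γ x _ hxh
        rw [hh0, mul_zero] at hxh
        exact ⟨0, by rw [← hxh]; simp⟩
      | succ m ih =>
        intro γ x hx hxh
        by_cases hm : m < n
        · have hsp : x = x * e ⟨m, hm⟩ + x * h m := by
            conv_lhs => rw [← hxh]
            rw [hsucc m hm, mul_add]
          set a := x * e ⟨m, hm⟩ with ha_def
          set b := x * h m with hb_def
          have ham : a * e ⟨m, hm⟩ = a := by rw [ha_def, mul_assoc, heidem]
          have ha_mem : a ∈ 𝒜 γ :=
            (add_zero γ) ▸ SetLike.mul_mem_graded hx (he0 ⟨m, hm⟩)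
          obtain ⟨y', hy'⟩ := lemB n γ a ha_mem ⟨m, hm⟩ ham (by rw [hhn, one_mul])
          set y₀ : A := (DirectSum.decompose 𝒜 y' (-γ) : A) with hy₀def
          have hy₀mem : y₀ ∈ 𝒜 (-γ) := SetLike.coe_mem _
          have hy₀a : a * y₀ * a = a := homog_proj_sandwich 𝒜 ha_mem hy'
          set y := e ⟨m, hm⟩ * y₀ with hydef
          have hymem : y ∈ 𝒜 (-γ) :=
            (zero_add (-γ)) ▸ SetLike.mul_mem_graded (he0 ⟨m, hm⟩) hy₀mem
          have hay : a * y * a = a := by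
            rw [hydef, ← mul_assoc a (e ⟨m, hm⟩) y₀, ham]
            exact hy₀a
          have hby : b * y = 0 := by
            rw [hb_def, hydef, ← mul_assoc, mul_assoc x (h m) (e ⟨m, hm⟩),
              hh_e0 ⟨m, hm⟩ m le_rfl, mul_zero, zero_mul]
          have hxyx : x * y * x = a + a * y * b := by
            conv_lhs => rw [hsp]
            rw [add_mul, hby, add_zero, mul_add, hay]
          have hx'2 : x - x * y * x = b - a * y * b := by
            rw [hxyx]
            conv_lhs => rw [hsp]
            abel
          have hx'mem : x - x * y * x ∈ 𝒜 γ := by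
            refine sub_mem hx ?_
            have h1 := SetLike.mul_mem_graded (SetLike.mul_mem_graded hx hymem) hx
            have h2 : γ + -γ + γ = γ := by abel
            exact h2 ▸ h1
          have hbh : b * h m = b := by rw [hb_def, mul_assoc, hhm_idem]
          have hx'h : (x - x * y * x) * h m = x - x * y * x := by
            rw [hx'2, sub_mul, hbh, mul_assoc (a * y) b (h m), hbh]
          obtain ⟨z, hz⟩ := ih γ (x - x * y * x) hx'mem hx'h
          refine ⟨y + (1 - y * x) * z * (1 - x * y), ?_⟩
          have expand : x * (y + (1 - y * x) * z * (1 - x * y)) * x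
              = x * y * x + (x - x * y * x) * z * (x - x * y * x) := by
            noncomm_ring
          rw [expand, hz]
          abel
        · have hfe : h (m + 1) = h m := hstable m (by omega)
          exact ih γ x hx (by rw [← hfe]; exact hxh)
    intro γ x hx
    exact lemC n γ x hx (by rw [hhn, mul_one])
end

section
/- Let A be a unital Γ-graded ring which is graded von Neumann regular, let n ≥ 1, let δ : Fin n → Γ, and let γ ∈ Γ. Suppose X is an n×n matrix over A all of whose entries satisfy X i j ∈ A_{γ + δ(j) − δ(i)} (i.e., X is a homogeneous element of degree γ of the shifted matrix ring M_n(A)(δ)). Then there exists an n×n matrix Y over A with Y i j ∈ A_{−γ + δ(j) − δ(i)} for all i, j, such that X*Y*X = X. In particular, the shifted matrix ring M_n(A)(δ) is graded von Neumann regular. -/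
section Aux
variable {Γ : Type*} [AddCommGroup Γ] [DecidableEq Γ]
  {A : Type*} [Ring A] (𝒜 : Γ → AddSubgroup A) [GradedRing 𝒜]

lemma aux_mul_mem_deg {a b : A} {α β σ : Γ} (ha : a ∈ 𝒜 α) (hb : b ∈ 𝒜 β)
    (h : α + β = σ) : a * b ∈ 𝒜 σ := h ▸ SetLike.mul_mem_graded ha hb

lemma aux_proj_sandwich (α : Γ) {x : A} (hx : x ∈ 𝒜 α) (y : A) :
    x * (GradedRing.proj 𝒜 (-α) y : A) * x = GradedRing.proj 𝒜 α (x * y * x) := by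
  induction y using DirectSum.Decomposition.inductionOn 𝒜 with
  | zero => simp
  | homogeneous m =>
    rename_i i
    by_cases h : i = -α
    · subst h
      rw [GradedRing.proj_apply, GradedRing.proj_apply,
        DirectSum.decompose_of_mem_same 𝒜 m.2,
        DirectSum.decompose_of_mem_same 𝒜
          (aux_mul_mem_deg 𝒜 (aux_mul_mem_deg 𝒜 hx m.2 rfl) hx (by abel))]
    · rw [GradedRing.proj_apply, GradedRing.proj_apply,
        DirectSum.decompose_of_mem_ne 𝒜 m.2 h,
        DirectSum.decompose_of_mem_ne 𝒜
          (aux_mul_mem_deg 𝒜 (aux_mul_mem_deg 𝒜 hx m.2 rfl) hx rfl)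
          (fun hh : α + i + α = α => h (by
            have h2 : α + i = α + -α := by
              apply add_right_cancel (b := α)
              rw [hh]; abel
            exact add_left_cancel h2))]
      simp
  | add a b ha hb =>
    simp only [map_add, mul_add, add_mul, ha, hb]

lemma aux_hom_inner (hA : GradedVNRegular 𝒜) (α : Γ) {x : A} (hx : x ∈ 𝒜 α) :
    ∃ z ∈ 𝒜 (-α), x * z * x = x := by
  obtain ⟨y, hy⟩ := hA α x hx
  refine ⟨GradedRing.proj 𝒜 (-α) y, ?_, ?_⟩
  · rw [GradedRing.proj_apply]; exact SetLike.coe_mem _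
  · rw [aux_proj_sandwich 𝒜 α hx, hy, GradedRing.proj_apply,
      DirectSum.decompose_of_mem_same 𝒜 hx]


lemma aux_key_ideal (hA : GradedVNRegular 𝒜) :
    ∀ (m : ℕ) (b : Fin m → A) (β : Fin m → Γ), (∀ i, b i ∈ 𝒜 (β i)) →
      ∃ w : Fin m → A, (∀ i, w i ∈ 𝒜 (-β i)) ∧
        ∀ j, (∑ i, b i * w i) * b j = b j := by
  intro m
  induction m with
  | zero =>
    intro b β hb
    exact ⟨fun i => i.elim0, fun i => i.elim0, fun j => j.elim0⟩
  | succ m ih =>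
    intro b β hb
    obtain ⟨w', hw', ht'⟩ := ih (fun i => b i.castSucc) (fun i => β i.castSucc)
      (fun i => hb i.castSucc)
    set t' : A := ∑ i : Fin m, b i.castSucc * w' i with ht'def
    have ht'mem : t' ∈ 𝒜 0 :=
      sum_mem fun i _ => aux_mul_mem_deg 𝒜 (hb i.castSucc) (hw' i) (add_neg_cancel _)
    set c : A := b (Fin.last m) - t' * b (Fin.last m) with hcdef
    have hcmem : c ∈ 𝒜 (β (Fin.last m)) :=
      sub_mem (hb _) (aux_mul_mem_deg 𝒜 ht'mem (hb _) (zero_add _))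
    obtain ⟨c', hc'mem, hccc⟩ := aux_hom_inner 𝒜 hA (β (Fin.last m)) hcmem
    set u : A := c' - c' * t' with hudef
    have humem : u ∈ 𝒜 (-(β (Fin.last m))) :=
      sub_mem hc'mem (aux_mul_mem_deg 𝒜 hc'mem ht'mem (add_zero _))
    refine ⟨Fin.lastCases u (fun i => w' i - w' i * (b (Fin.last m) * u)), ?_, ?_⟩
    · intro i
      refine Fin.lastCases ?_ (fun i => ?_) i
      · simpa using humem
      · simp only [Fin.lastCases_castSucc]
        exact sub_mem (hw' i)
          (aux_mul_mem_deg 𝒜 (hw' i)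
            (aux_mul_mem_deg 𝒜 (hb _) humem (add_neg_cancel _)) (add_zero _))
    · have hsum : (∑ i : Fin (m+1),
          b i * Fin.lastCases (motive := fun _ => A) u
            (fun i => w' i - w' i * (b (Fin.last m) * u)) i) = t' + c * u := by
        rw [Fin.sum_univ_castSucc]
        simp only [Fin.lastCases_castSucc, Fin.lastCases_last]
        rw [hcdef, sub_mul]
        have : ∀ i : Fin m,
            b i.castSucc * (w' i - w' i * (b (Fin.last m) * u)) =
              b i.castSucc * w' i - (b i.castSucc * w' i) * (b (Fin.last m) * u) := by
          intro i; rw [mul_sub, mul_assoc]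
        rw [Finset.sum_congr rfl (fun i _ => this i), Finset.sum_sub_distrib,
          ← Finset.sum_mul, ← ht'def]
        noncomm_ring
      rw [hsum]
      have hcu : c * u = c * c' - c * c' * t' := by
        rw [hudef, mul_sub, mul_assoc]
      intro j
      refine Fin.lastCases ?_ (fun j => ?_) j
      · rw [add_mul, hcu, sub_mul, mul_assoc (c * c') t' (b (Fin.last m))]
        have h1 : c * c' * b (Fin.last m) - c * c' * (t' * b (Fin.last m)) = c := by
          rw [← mul_sub, ← hcdef, hccc]
        rw [h1, hcdef]; abel
      · have hj := ht' j
        rw [add_mul, hcu, sub_mul, mul_assoc (c * c') t' (b j.castSucc), hj]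
        simp [hj]

lemma aux_matmul_mem {n : ℕ} (δ : Fin n → Γ) {π ρ σ : Γ}
    {P Q : Matrix (Fin n) (Fin n) A}
    (hP : ∀ i j, P i j ∈ 𝒜 (π + δ j - δ i)) (hQ : ∀ i j, Q i j ∈ 𝒜 (ρ + δ j - δ i))
    (h : π + ρ = σ) : ∀ i j, (P * Q) i j ∈ 𝒜 (σ + δ j - δ i) := by
  intro i j
  rw [Matrix.mul_apply]
  exact sum_mem fun l _ => aux_mul_mem_deg 𝒜 (hP i l) (hQ l j) (by rw [← h]; abel)

lemma aux_one_mem {n : ℕ} (δ : Fin n → Γ) :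
    ∀ i j, (1 : Matrix (Fin n) (Fin n) A) i j ∈ 𝒜 (0 + δ j - δ i) := by
  intro i j
  rw [Matrix.one_apply]
  split
  · rename_i h; subst h
    have e : (0 : Γ) + δ i - δ i = 0 := by abel
    rw [e]; exact SetLike.one_mem_graded 𝒜
  · exact zero_mem _

lemma aux_ring_idem {R : Type*} [Ring R] {g e : R} (hg : g * g = g) (heg : e * g = 0)
    (hee : e * e = e) : (g + (1 - g) * e) * (g + (1 - g) * e) = g + (1 - g) * e := by
  have h1 : e * ((1 - g) * e) = e := by
    rw [sub_mul, one_mul, mul_sub, ← mul_assoc, heg, zero_mul, sub_zero, hee]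
  have h2 : g * ((1 - g) * e) = 0 := by
    rw [← mul_assoc, mul_sub, mul_one, hg, sub_self, zero_mul]
  have h3 : (1 - g) * e * g = 0 := by
    rw [mul_assoc, heg, mul_zero]
  rw [add_mul, mul_add, mul_add, hg, h2, h3, add_zero, zero_add, mul_assoc, h1]

theorem aux_main {n : ℕ} (hA : GradedVNRegular 𝒜) (δ : Fin n → Γ) (γ : Γ)
    (X : Matrix (Fin n) (Fin n) A)
    (hX : ∀ i j, X i j ∈ 𝒜 (γ + δ j - δ i)) :
    ∃ Y : Matrix (Fin n) (Fin n) A,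
      (∀ i j, Y i j ∈ 𝒜 (-γ + δ j - δ i)) ∧ X * Y * X = X := by
  have main : ∀ k : ℕ, k ≤ n → ∃ W : Matrix (Fin n) (Fin n) A,
      (∀ i j, W i j ∈ 𝒜 (-γ + δ j - δ i)) ∧ (W * X) * (W * X) = W * X ∧
        ∀ i : Fin n, (i : ℕ) < k → ∀ j, (X * (W * X)) i j = X i j := by
    intro k
    induction k with
    | zero =>
      intro _
      refine ⟨0, fun i j => zero_mem _, by simp, fun i hi => absurd hi (Nat.not_lt_zero _)⟩
    | succ k ih =>
      intro hk
      obtain ⟨W, hWmem, hG, hrows⟩ := ih (Nat.le_of_succ_le hk)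
      set K : Fin n := ⟨k, hk⟩ with hKdef
      set N : Matrix (Fin n) (Fin n) A := X - X * (W * X) with hNdef
      have hGmem : ∀ i j, (W * X) i j ∈ 𝒜 (0 + δ j - δ i) :=
        aux_matmul_mem 𝒜 δ hWmem hX (by abel)
      have hNmem : ∀ i j, N i j ∈ 𝒜 (γ + δ j - δ i) := fun i j =>
        sub_mem (hX i j) (aux_matmul_mem 𝒜 δ hX hGmem (by abel) i j)
      obtain ⟨w, hw, ht⟩ := aux_key_ideal 𝒜 hA n (fun j => N K j)
        (fun j => γ + δ j - δ K) (fun j => hNmem K j)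
      set D : Matrix (Fin n) (Fin n) A :=
        Matrix.of (fun i j => if j = K then w i else 0) with hDdef
      have hDmem : ∀ i j, D i j ∈ 𝒜 (-γ + δ j - δ i) := by
        intro i j
        by_cases h : j = K
        · subst h
          have e : -γ + δ K - δ i = -(γ + δ i - δ K) := by abel
          rw [hDdef, e]
          simpa using hw i
        · simp only [hDdef, Matrix.of_apply, if_neg h]
          exact zero_mem _
      have hD : ∀ M : Matrix (Fin n) (Fin n) A, ∀ i j, (D * M) i j = w i * M K j := by
        intro M i j
        rw [Matrix.mul_apply]
        rw [show (∑ l, D i l * M l j) = ∑ l, if l = K then w i * M l j else 0 from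
          Finset.sum_congr rfl fun l _ => by simp [hDdef, ite_mul]]
        simp [Finset.sum_ite_eq']
      set E : Matrix (Fin n) (Fin n) A := D * N with hEdef
      have hEentry : ∀ i j, E i j = w i * N K j := fun i j => hD N i j
      have hEE : E * E = E := by
        ext i j
        rw [Matrix.mul_apply]
        calc (∑ l, E i l * E l j) = ∑ l, w i * ((N K l * w l) * N K j) := by
              refine Finset.sum_congr rfl fun l _ => ?_
              rw [hEentry, hEentry]; noncomm_ring
          _ = w i * ((∑ l, N K l * w l) * N K j) := by
              rw [← Finset.mul_sum, ← Finset.sum_mul]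
          _ = w i * N K j := by rw [ht j]
          _ = E i j := (hEentry i j).symm
      have hNG : N * (W * X) = 0 := by
        rw [hNdef, Matrix.sub_mul, Matrix.mul_assoc X (W * X) (W * X), hG, sub_self]
      have hEG : E * (W * X) = 0 := by
        rw [hEdef, Matrix.mul_assoc, hNG, Matrix.mul_zero]
      set W' : Matrix (Fin n) (Fin n) A :=
        W + (1 - W * X) * (D - D * (X * W)) with hW'def
      have h2 : (D - D * (X * W)) * X = E := by
        rw [Matrix.sub_mul, Matrix.mul_assoc D (X * W) X, Matrix.mul_assoc X W X,
          ← Matrix.mul_sub, hEdef, hNdef]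
      have hW'X : W' * X = W * X + (1 - W * X) * E := by
        rw [hW'def, Matrix.add_mul, Matrix.mul_assoc, h2]
      have hW'mem : ∀ i j, W' i j ∈ 𝒜 (-γ + δ j - δ i) := by
        intro i j
        refine add_mem (hWmem i j) ?_
        have hone : ∀ i j, (1 - W * X) i j ∈ 𝒜 (0 + δ j - δ i) := fun i j =>
          sub_mem (aux_one_mem 𝒜 δ i j) (hGmem i j)
        have hXW : ∀ i j, (X * W) i j ∈ 𝒜 (0 + δ j - δ i) :=
          aux_matmul_mem 𝒜 δ hX hWmem (add_neg_cancel γ)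
        have hDXW : ∀ i j, (D - D * (X * W)) i j ∈ 𝒜 (-γ + δ j - δ i) := fun i j =>
          sub_mem (hDmem i j)
            (aux_matmul_mem 𝒜 δ hDmem hXW (add_zero _) i j)
        exact aux_matmul_mem 𝒜 δ hone hDXW (by abel) i j
      refine ⟨W', hW'mem, ?_, ?_⟩
      · rw [hW'X]; exact aux_ring_idem hG hEG hEE
      · have hXG' : X * (W' * X) = X * (W * X) + N * E := by
          rw [hW'X, Matrix.mul_add, ← Matrix.mul_assoc X (1 - W * X) E,
            Matrix.mul_sub X 1 (W * X), Matrix.mul_one, ← hNdef]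
        intro i hi j
        rw [hXG', Matrix.add_apply]
        rcases Nat.lt_succ_iff_lt_or_eq.mp hi with h | h
        · have hNrow : ∀ l, N i l = 0 := by
            intro l
            rw [hNdef, Matrix.sub_apply, hrows i h l, sub_self]
          have hz : (N * E) i j = 0 := by
            rw [Matrix.mul_apply]
            exact Finset.sum_eq_zero fun l _ => by rw [hNrow l, zero_mul]
          rw [hz, add_zero]
          exact hrows i h j
        · have hiK : i = K := Fin.ext h
          rw [hiK]
          have hNE : (N * E) K j = N K j := by
            rw [Matrix.mul_apply]
            have hterm : ∀ l, N K l * E l j = (N K l * w l) * N K j := fun l => by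
              rw [hEentry, ← mul_assoc]
            rw [Finset.sum_congr rfl fun l _ => hterm l, ← Finset.sum_mul, ht j]
          rw [hNE, hNdef, Matrix.sub_apply, add_sub_cancel]
  obtain ⟨W, hWmem, _, hrows⟩ := main n le_rfl
  refine ⟨W, hWmem, ?_⟩
  rw [Matrix.mul_assoc]
  ext i j
  exact hrows i i.isLt j

end Aux

/-- If `A` is graded von Neumann regular, then so is every shifted matrix ring
`Mₙ(A)(δ)`: every homogeneous matrix `X` of degree `γ` (i.e. `X i j ∈ A_{γ+δⱼ-δᵢ}`)
admits a homogeneous inner inverse `Y` of degree `-γ`. -/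
theorem shifted_matrix_ring_graded_regular
    {Γ : Type*} [AddCommGroup Γ] [DecidableEq Γ]
    {A : Type*} [Ring A] (𝒜 : Γ → AddSubgroup A) [GradedRing 𝒜]
    (hA : GradedVNRegular 𝒜)
    (n : ℕ) (hn : 1 ≤ n) (δ : Fin n → Γ) (γ : Γ)
    (X : Matrix (Fin n) (Fin n) A)
    (hX : ∀ i j, X i j ∈ 𝒜 (γ + δ j - δ i)) :
    ∃ Y : Matrix (Fin n) (Fin n) A,
      (∀ i j, Y i j ∈ 𝒜 (-γ + δ j - δ i)) ∧ X * Y * X = X :=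
  aux_main 𝒜 hA δ γ X hX
end

section
/- Let A be a unital Γ-graded ring which is graded von Neumann regular, let n ≥ 1, let δ : Fin n → Γ, and let e be an n×n idempotent matrix over A (e*e = e) whose entries satisfy e i j ∈ A_{δ(j) − δ(i)} (i.e., e is a homogeneous idempotent of degree 0 in the shifted matrix ring M_n(A)(δ)). Then the corner ring e·M_n(A)·e is graded von Neumann regular: for every γ ∈ Γ and every n×n matrix X with X i j ∈ A_{γ + δ(j) − δ(i)} for all i, j and e*X*e = X, there exists an n×n matrix Y with Y i j ∈ A_{−γ + δ(j) − δ(i)} for all i, j, e*Y*e = Y, and X*Y*X = X. -/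
set_option linter.unusedVariables false



section aux
variable {Γ : Type*} [AddCommGroup Γ] [DecidableEq Γ] {A : Type*} [Ring A]
variable (𝒜 : Γ → AddSubgroup A) [GradedRing 𝒜]

lemma aux_proj3 {α β : Γ} {a b c : A} (ha : a ∈ 𝒜 α) (hc : c ∈ 𝒜 β) (j : Γ) :
    (DirectSum.decompose 𝒜 (a * b * c) (α + j + β) : A)
      = a * (DirectSum.decompose 𝒜 b j : A) * c := by
  rw [mul_assoc, add_assoc, DirectSum.coe_decompose_mul_add_of_left_mem 𝒜 ha,
    DirectSum.coe_decompose_mul_add_of_right_mem 𝒜 hc, mul_assoc]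

lemma aux_homog_inner (hA : GradedVNRegular 𝒜) {d : Γ} {x : A} (hx : x ∈ 𝒜 d) :
    ∃ y ∈ 𝒜 (-d), x * y * x = x := by
  obtain ⟨y, hy⟩ := hA d x hx
  refine ⟨(DirectSum.decompose 𝒜 y (-d) : A), SetLike.coe_mem _, ?_⟩
  have := aux_proj3 𝒜 (b := y) hx hx (-d)
  rw [hy] at this
  rw [← this, show d + -d + d = d by abel, DirectSum.decompose_of_mem_same 𝒜 hx]

lemma aux_idemL {R : Type*} [Ring R] {e f : R} (hee : e * e = e) (hff : f * f = f)
    (hfe : f * e = 0) : (e + f - e * f) * (e + f - e * f) = e + f - e * f := by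
  have h1 : e * (e * f) = e * f := by rw [← mul_assoc, hee]
  have h2 : f * (e * f) = 0 := by rw [← mul_assoc, hfe, zero_mul]
  have h3 : e * f * e = 0 := by rw [mul_assoc, hfe, mul_zero]
  have h4 : e * f * f = e * f := by rw [mul_assoc, hff]
  have h5 : e * f * (e * f) = 0 := by rw [mul_assoc, h2, mul_zero]
  simp only [add_mul, sub_mul, mul_add, mul_sub, hee, hff, hfe, h1, h2, h3, h4, h5,
    mul_zero, zero_mul, sub_zero, zero_sub]
  abel

lemma aux_idemR {R : Type*} [Ring R] {e f : R} (hee : e * e = e) (hff : f * f = f)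
    (hef : e * f = 0) : (e + f - f * e) * (e + f - f * e) = e + f - f * e := by
  have h1 : f * e * e = f * e := by rw [mul_assoc, hee]
  have h2 : f * e * f = 0 := by rw [mul_assoc, hef, mul_zero]
  have h3 : e * (f * e) = 0 := by rw [← mul_assoc, hef, zero_mul]
  have h4 : f * (f * e) = f * e := by rw [← mul_assoc, hff]
  have h5 : f * e * (f * e) = 0 := by rw [mul_assoc, h3, mul_zero]
  simp only [add_mul, sub_mul, mul_add, mul_sub, hee, hff, hef, h1, h2, h3, h4, h5,
    mul_zero, zero_mul, sub_zero, zero_sub]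
  abel

lemma aux_span (hA : GradedVNRegular 𝒜) {n : ℕ} (d : Fin n → Γ) (v : Fin n → A)
    (hv : ∀ i, v i ∈ 𝒜 (d i)) (s : Finset (Fin n)) :
    ∃ (h : A) (w : Fin n → A), h ∈ 𝒜 0 ∧ h * h = h ∧ (∀ i ∈ s, v i * h = v i) ∧
      (∀ i, w i ∈ 𝒜 (-(d i))) ∧ ∑ i ∈ s, w i * v i = h := by
  classical
  induction s using Finset.induction_on with
  | empty => exact ⟨0, 0, zero_mem _, by simp, by simp, fun i => zero_mem _, by simp⟩
  | @insert a s' ha ih =>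
    obtain ⟨e, w, he0, hee, hve, hw, hsum⟩ := ih
    have hvae : v a * e ∈ 𝒜 (d a) := by
      have := SetLike.mul_mem_graded (hv a) he0; rwa [add_zero] at this
    have hx : v a - v a * e ∈ 𝒜 (d a) := sub_mem (hv a) hvae
    obtain ⟨x', hx', hxx⟩ := aux_homog_inner 𝒜 hA hx
    set x := v a - v a * e with hxdef
    have hxe : x * e = 0 := by rw [hxdef, sub_mul, mul_assoc, hee, sub_self]
    set f := x' * x with hfdef
    have hff : f * f = f := by
      rw [hfdef, mul_assoc, ← mul_assoc x x' x, hxx]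
    have hfe : f * e = 0 := by rw [hfdef, mul_assoc, hxe, mul_zero]
    have hf0 : f ∈ 𝒜 (0 : Γ) := by
      have := SetLike.mul_mem_graded hx' hx; rwa [neg_add_cancel] at this
    have hxf : x * f = x := by rw [hfdef, ← mul_assoc, hxx]
    refine ⟨e + f - e * f,
      fun i => if i = a then (1 - e) * x' else w i - (1 - e) * x' * v a * w i,
      sub_mem (add_mem he0 hf0)
        (by have := SetLike.mul_mem_graded he0 hf0; rwa [add_zero] at this),
      aux_idemL hee hff hfe, ?_, ?_, ?_⟩
    · intro i hi
      rcases Finset.mem_insert.mp hi with h | h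
      · subst h
        have expand : v i * (e + f - e * f) = v i * e + (v i - v i * e) * f := by
          noncomm_ring
        rw [expand, ← hxdef, hxf, hxdef]
        abel
      · have expand : v i * (e + f - e * f) = v i * e + v i * f - v i * e * f := by
          noncomm_ring
        rw [expand, hve i h]
        abel
    · intro i
      dsimp only
      split
      · rename_i h
        subst h
        have := SetLike.mul_mem_graded (sub_mem (SetLike.one_mem_graded 𝒜) he0) hx'
        rwa [zero_add] at this
      · have := SetLike.mul_mem_graded (SetLike.mul_mem_graded
          (SetLike.mul_mem_graded (sub_mem (SetLike.one_mem_graded 𝒜) he0) hx') (hv a)) (hw i)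
        rw [show (0 : Γ) + -(d a) + d a + -(d i) = -(d i) by abel] at this
        exact sub_mem (hw i) this
    · rw [Finset.sum_insert ha]
      dsimp only
      rw [if_pos rfl]
      have hcong : ∀ i ∈ s',
          (if i = a then (1 - e) * x' else w i - (1 - e) * x' * v a * w i) * v i
            = w i * v i - (1 - e) * x' * v a * (w i * v i) := by
        intro i hi
        rw [if_neg (by rintro rfl; exact ha hi), sub_mul, mul_assoc]
      rw [Finset.sum_congr rfl hcong, Finset.sum_sub_distrib, ← Finset.mul_sum, hsum]
      rw [hfdef, hxdef]
      noncomm_ring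
end aux

section aux2
variable {Γ : Type*} [AddCommGroup Γ] [DecidableEq Γ] {A : Type*} [Ring A]
variable (𝒜 : Γ → AddSubgroup A) [GradedRing 𝒜]

lemma aux_matrix (hA : GradedVNRegular 𝒜) {n : ℕ} (γ : Γ) (δ : Fin n → Γ)
    (X : Matrix (Fin n) (Fin n) A) (hX : ∀ i j, X i j ∈ 𝒜 (γ + δ j - δ i))
    (s : Finset (Fin n)) :
    ∃ E B : Matrix (Fin n) (Fin n) A, E * E = E ∧ (∀ i k, E i k ∈ 𝒜 (δ k - δ i)) ∧
      X * B = E ∧ ∀ j ∈ s, ∀ i, (E * X) i j = X i j := by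
  classical
  induction s using Finset.induction_on with
  | empty => exact ⟨0, 0, by simp, fun i k => zero_mem _, by simp, by simp⟩
  | @insert a s' ha ih =>
    obtain ⟨E, B, hEE, hEd, hXB, hcol⟩ := ih
    set u : Fin n → A := fun i => X i a - (E * X) i a with hu
    have hul : ∀ l, u l = X l a - (E * X) l a := fun l => by rw [hu]
    have hud : ∀ i, u i ∈ 𝒜 (γ + δ a - δ i) := by
      intro i
      rw [hul i]
      refine sub_mem (hX i a) ?_
      rw [Matrix.mul_apply]
      refine AddSubgroup.sum_mem _ fun k _ => ?_
      have := SetLike.mul_mem_graded (hEd i k) (hX k a)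
      rwa [show δ k - δ i + (γ + δ a - δ k) = γ + δ a - δ i by abel] at this
    obtain ⟨h, w, hh0, hhh, hvh, hwd, hsum⟩ :=
      aux_span 𝒜 hA (fun i => γ + δ a - δ i) u hud Finset.univ
    set f : Matrix (Fin n) (Fin n) A := Matrix.of fun i k => u i * w k with hf
    have hfik : ∀ i k, f i k = u i * w k := fun i k => by rw [hf]; rfl
    have hfd : ∀ i k, f i k ∈ 𝒜 (δ k - δ i) := by
      intro i k
      rw [hfik]
      have := SetLike.mul_mem_graded (hud i) (hwd k)
      rwa [show γ + δ a - δ i + -(γ + δ a - δ k) = δ k - δ i by abel] at this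
    have hEu : ∀ i, ∑ l, E i l * u l = 0 := by
      intro i
      have step : ∀ l, E i l * u l = E i l * X l a - E i l * (E * X) l a := by
        intro l; rw [hul l, mul_sub]
      rw [Finset.sum_congr rfl fun l _ => step l, Finset.sum_sub_distrib,
        ← Matrix.mul_apply, ← Matrix.mul_apply, ← mul_assoc, hEE, sub_self]
    have hEf : E * f = 0 := by
      ext i k
      rw [Matrix.mul_apply]
      have step : ∀ l, E i l * f l k = E i l * u l * w k := by
        intro l; rw [hfik, ← mul_assoc]
      rw [Finset.sum_congr rfl fun l _ => step l, ← Finset.sum_mul, hEu, zero_mul,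
        Matrix.zero_apply]
    have hff : f * f = f := by
      ext i k
      rw [Matrix.mul_apply]
      have step : ∀ l, f i l * f l k = u i * (w l * u l * w k) := by
        intro l; rw [hfik, hfik, mul_assoc, ← mul_assoc (w l)]
      calc ∑ l, f i l * f l k = ∑ l, u i * (w l * u l * w k) :=
            Finset.sum_congr rfl fun l _ => step l
        _ = u i * ((∑ l, w l * u l) * w k) := by
            rw [← Finset.mul_sum, Finset.sum_mul]
        _ = u i * w k := by rw [hsum, ← mul_assoc, hvh i (Finset.mem_univ i)]
        _ = f i k := (hfik i k).symm
    set W : Matrix (Fin n) (Fin n) A := Matrix.of fun i k => if i = a then w k else 0 with hW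
    have hfW : (X - E * X) * W = f := by
      ext i k
      rw [Matrix.mul_apply]
      have step : ∀ l, (X - E * X) i l * W l k
          = if l = a then (X - E * X) i l * w k else 0 := by
        intro l
        rw [hW]
        by_cases hl : l = a
        · simp [hl]
        · simp [hl]
      rw [Finset.sum_congr rfl fun l _ => step l, Finset.sum_ite_eq' Finset.univ a]
      simp only [Finset.mem_univ, if_pos, Matrix.sub_apply]
      rw [← hul i, hfik]
    have hXW : X * ((1 - B * X) * W) = f := by
      rw [← mul_assoc, mul_sub, mul_one, ← mul_assoc, hXB, hfW]
    refine ⟨E + f - f * E, B + (1 - B * X) * W * (1 - E), aux_idemR hEE hff hEf, ?_, ?_, ?_⟩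
    · intro i k
      have hfE : (f * E) i k ∈ 𝒜 (δ k - δ i) := by
        rw [Matrix.mul_apply]
        refine AddSubgroup.sum_mem _ fun l _ => ?_
        have := SetLike.mul_mem_graded (hfd i l) (hEd l k)
        rwa [show δ l - δ i + (δ k - δ l) = δ k - δ i by abel] at this
      simp only [Matrix.sub_apply, Matrix.add_apply]
      exact sub_mem (add_mem (hEd i k) (hfd i k)) hfE
    · calc X * (B + (1 - B * X) * W * (1 - E))
          = X * B + X * ((1 - B * X) * W) * (1 - E) := by noncomm_ring
        _ = E + f * (1 - E) := by rw [hXB, hXW]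
        _ = E + f - f * E := by noncomm_ring
    · have expand : (E + f - f * E) * X = E * X + f * X - f * (E * X) := by noncomm_ring
      intro j hj i
      rcases Finset.mem_insert.mp hj with hje | hjs
      · subst hje
        have key : (f * X) i j - (f * (E * X)) i j = u i := by
          rw [Matrix.mul_apply, Matrix.mul_apply, ← Finset.sum_sub_distrib]
          have step : ∀ l, f i l * X l j - f i l * ((E * X) l j) = u i * (w l * u l) := by
            intro l
            rw [hfik, ← mul_sub, ← hul l, mul_assoc]
          rw [Finset.sum_congr rfl fun l _ => step l, ← Finset.mul_sum, hsum,
            hvh i (Finset.mem_univ i)]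
        rw [expand]
        simp only [Matrix.sub_apply, Matrix.add_apply]
        calc (E * X) i j + (f * X) i j - (f * (E * X)) i j
            = (E * X) i j + ((f * X) i j - (f * (E * X)) i j) := by abel
          _ = (E * X) i j + u i := by rw [key]
          _ = X i j := by rw [hul i]; abel
      · rw [expand]
        simp only [Matrix.sub_apply, Matrix.add_apply]
        have hfEX : (f * (E * X)) i j = (f * X) i j := by
          rw [Matrix.mul_apply, Matrix.mul_apply]
          exact Finset.sum_congr rfl fun l _ => by rw [hcol j hjs l]
        rw [hfEX, hcol j hjs i]
        abel

lemma aux_pseudo (hA : GradedVNRegular 𝒜) {n : ℕ} (γ : Γ) (δ : Fin n → Γ)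
    (X : Matrix (Fin n) (Fin n) A) (hX : ∀ i j, X i j ∈ 𝒜 (γ + δ j - δ i)) :
    ∃ Y : Matrix (Fin n) (Fin n) A, X * Y * X = X := by
  obtain ⟨E, B, hEE, hEd, hXB, hcol⟩ := aux_matrix 𝒜 hA γ δ X hX Finset.univ
  have hEX : E * X = X := by
    ext i j
    exact hcol j (Finset.mem_univ j) i
  exact ⟨B, by rw [hXB, hEX]⟩

end aux2

/-- If `A` is graded von Neumann regular and `e` is a homogeneous idempotent of
degree `0` in the shifted matrix ring `Mₙ(A)(δ)`, then the corner ring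
`e·Mₙ(A)(δ)·e` is graded von Neumann regular. -/
theorem corner_of_shifted_matrix_ring_graded_regular
    {Γ : Type*} [AddCommGroup Γ] [DecidableEq Γ]
    {A : Type*} [Ring A] (𝒜 : Γ → AddSubgroup A) [GradedRing 𝒜]
    (hA : GradedVNRegular 𝒜)
    (n : ℕ) (hn : 1 ≤ n) (δ : Fin n → Γ)
    (e : Matrix (Fin n) (Fin n) A)
    (he : ∀ i j, e i j ∈ 𝒜 (δ j - δ i))
    (heidem : e * e = e) :
    ∀ (γ : Γ) (X : Matrix (Fin n) (Fin n) A),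
      (∀ i j, X i j ∈ 𝒜 (γ + δ j - δ i)) → e * X * e = X →
      ∃ Y : Matrix (Fin n) (Fin n) A,
        (∀ i j, Y i j ∈ 𝒜 (-γ + δ j - δ i)) ∧ e * Y * e = Y ∧ X * Y * X = X := by
  intro γ X hX hXeX
  obtain ⟨Y0, hY0⟩ := aux_pseudo 𝒜 hA γ δ X hX
  set Y1 : Matrix (Fin n) (Fin n) A :=
    Matrix.of fun k l => (DirectSum.decompose 𝒜 (Y0 k l) (-γ + δ l - δ k) : A) with hY1
  have hY1d : ∀ k l, Y1 k l ∈ 𝒜 (-γ + δ l - δ k) := fun k l => SetLike.coe_mem _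
  have hXY1X : X * Y1 * X = X := by
    ext i j
    have lhs : (X * Y1 * X) i j = ∑ l, ∑ k, X i k * Y1 k l * X l j := by
      rw [Matrix.mul_apply]
      refine Finset.sum_congr rfl fun l _ => ?_
      rw [Matrix.mul_apply, Finset.sum_mul]
    have rhs0 : (X * Y0 * X) i j = ∑ l, ∑ k, X i k * Y0 k l * X l j := by
      rw [Matrix.mul_apply]
      refine Finset.sum_congr rfl fun l _ => ?_
      rw [Matrix.mul_apply, Finset.sum_mul]
    have term : ∀ l k, X i k * Y1 k l * X l j
        = GradedRing.proj 𝒜 (γ + δ j - δ i) (X i k * Y0 k l * X l j) := by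
      intro l k
      rw [GradedRing.proj_apply]
      have := aux_proj3 𝒜 (b := Y0 k l) (hX i k) (hX l j) (-γ + δ l - δ k)
      rw [show γ + δ k - δ i + (-γ + δ l - δ k) + (γ + δ j - δ l) = γ + δ j - δ i by abel]
        at this
      rw [this]
      rfl
    calc (X * Y1 * X) i j
        = ∑ l, ∑ k, GradedRing.proj 𝒜 (γ + δ j - δ i) (X i k * Y0 k l * X l j) := by
          rw [lhs]
          exact Finset.sum_congr rfl fun l _ => Finset.sum_congr rfl fun k _ => term l k
      _ = GradedRing.proj 𝒜 (γ + δ j - δ i) ((X * Y0 * X) i j) := by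
          rw [rhs0, map_sum]
          exact Finset.sum_congr rfl fun l _ => (map_sum _ _ _).symm
      _ = X i j := by
          rw [hY0, GradedRing.proj_apply, DirectSum.decompose_of_mem_same 𝒜 (hX i j)]
  have heX : e * X = X := by
    calc e * X = e * (e * X * e) := by rw [hXeX]
      _ = (e * e) * X * e := by noncomm_ring
      _ = X := by rw [heidem, hXeX]
  have hXe : X * e = X := by
    calc X * e = (e * X * e) * e := by rw [hXeX]
      _ = e * X * (e * e) := by noncomm_ring
      _ = X := by rw [heidem, hXeX]
  refine ⟨e * Y1 * e, ?_, ?_, ?_⟩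
  · intro i j
    rw [Matrix.mul_apply]
    refine AddSubgroup.sum_mem _ fun l _ => ?_
    have h1 : (e * Y1) i l ∈ 𝒜 (-γ + δ l - δ i) := by
      rw [Matrix.mul_apply]
      refine AddSubgroup.sum_mem _ fun k _ => ?_
      have := SetLike.mul_mem_graded (he i k) (hY1d k l)
      rwa [show δ k - δ i + (-γ + δ l - δ k) = -γ + δ l - δ i by abel] at this
    have := SetLike.mul_mem_graded h1 (he l j)
    rwa [show -γ + δ l - δ i + (δ j - δ l) = -γ + δ j - δ i by abel] at this
  · calc e * (e * Y1 * e) * e = (e * e) * Y1 * (e * e) := by noncomm_ring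
      _ = e * Y1 * e := by rw [heidem]
  · calc X * (e * Y1 * e) * X = (X * e) * Y1 * (e * X) := by noncomm_ring
      _ = X := by rw [hXe, heX, hXY1X]
end

section
/- Let A be a unital Γ-graded ring and let e be an idempotent with e ∈ A_0 which is full, i.e., the two-sided ideal of A generated by e equals A. Then A is graded von Neumann regular if and only if the corner ring e·A·e is graded von Neumann regular, i.e., if and only if for every γ ∈ Γ and every x ∈ A_γ with e*x*e = x there exists y ∈ A with e*y*e = y and x*y*x = x. -/
set_option linter.unusedSectionVars false
set_option maxHeartbeats 1000000

namespace GradedCornerAux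

section helpers
variable {A : Type*} [Ring A] {e : A}

lemma cor_el (heidem : e * e = e) {z : A} (hz : e * z * e = z) : e * z = z := by
  conv_lhs => rw [← hz, ← mul_assoc, ← mul_assoc, heidem]
  exact hz

lemma cor_er (heidem : e * e = e) {z : A} (hz : e * z * e = z) : z * e = z := by
  conv_lhs => rw [← hz, mul_assoc, heidem]
  exact hz

lemma cor_mul (heidem : e * e = e) {z w : A} (hz : e * z * e = z) (hw : e * w * e = w) :
    e * (z * w) * e = z * w := by
  rw [← mul_assoc, cor_el heidem hz, mul_assoc, cor_er heidem hw]

lemma cor_sub {z w : A} (hz : e * z * e = z) (hw : e * w * e = w) :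
    e * (z - w) * e = z - w := by rw [mul_sub, sub_mul, hz, hw]

lemma cor_add {z w : A} (hz : e * z * e = z) (hw : e * w * e = w) :
    e * (z + w) * e = z + w := by rw [mul_add, add_mul, hz, hw]

lemma cor_sum {ι : Type*} {s : Finset ι} {f : ι → A} (hf : ∀ i ∈ s, e * f i * e = f i) :
    e * (∑ i ∈ s, f i) * e = ∑ i ∈ s, f i := by
  rw [Finset.mul_sum, Finset.sum_mul]
  exact Finset.sum_congr rfl hf

lemma glue1 {p q : A} (hp : p*p = p) (hq : q*q = q) (hqp : q*p = 0) :
    (p + q - p*q)*(p + q - p*q) = p + q - p*q := by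
  have hp' : ∀ x, p*(p*x) = p*x := fun x => by rw [← mul_assoc, hp]
  have hq' : ∀ x, q*(q*x) = q*x := fun x => by rw [← mul_assoc, hq]
  have hqp' : ∀ x, q*(p*x) = 0 := fun x => by rw [← mul_assoc, hqp, zero_mul]
  simp only [mul_add, add_mul, mul_sub, sub_mul, mul_assoc, hp, hq, hqp, hp', hq', hqp',
    zero_mul, mul_zero, sub_zero, zero_sub, sub_neg_eq_add]
  abel

lemma glue2 {R : Type*} [Ring R] {p q : R} (hp : p*p = p) (hq : q*q = q) (hpq : p*q = 0) :
    (p + q - q*p)*(p + q - q*p) = p + q - q*p := by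
  have hp' : ∀ x, p*(p*x) = p*x := fun x => by rw [← mul_assoc, hp]
  have hq' : ∀ x, q*(q*x) = q*x := fun x => by rw [← mul_assoc, hq]
  have hpq' : ∀ x, p*(q*x) = 0 := fun x => by rw [← mul_assoc, hpq, zero_mul]
  simp only [mul_add, add_mul, mul_sub, sub_mul, mul_assoc, hp, hq, hpq, hp', hq', hpq',
    zero_mul, mul_zero, sub_zero, zero_sub, sub_neg_eq_add]
  abel
end helpers

section graded
open DirectSum
variable {Γ : Type*} [AddCommGroup Γ] [DecidableEq Γ]
variable {A : Type*} [Ring A] (𝒜 : Γ → AddSubgroup A) [GradedRing 𝒜]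
variable {e : A}

lemma mem_cast {γ δ : Γ} (h : γ = δ) {x : A} (hx : x ∈ 𝒜 γ) : x ∈ 𝒜 δ := h ▸ hx

lemma hom_inv (he0 : e ∈ 𝒜 0)
    (hcorner : ∀ γ : Γ, ∀ x ∈ 𝒜 γ, e * x * e = x → ∃ y : A, e * y * e = y ∧ x * y * x = x)
    {d : Γ} {v : A} (hv : v ∈ 𝒜 d) (hve : e * v * e = v) :
    ∃ y : A, y ∈ 𝒜 (-d) ∧ e * y * e = y ∧ v * y * v = v := by
  obtain ⟨y₀, hy₀e, hy₀⟩ := hcorner d v hv hve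
  set y : A := (decompose 𝒜 y₀ (-d) : A) with hy
  have h1 : (decompose 𝒜 (y₀ * e) (-d) : A) = y * e := by
    have := coe_decompose_mul_add_of_right_mem 𝒜 (i := -d) (j := (0:Γ)) (a := y₀) he0
    rw [add_zero] at this
    exact this
  have h2 : (decompose 𝒜 (e * (y₀ * e)) (-d) : A) = e * (decompose 𝒜 (y₀ * e) (-d) : A) := by
    have := coe_decompose_mul_add_of_left_mem 𝒜 (i := (0:Γ)) (j := -d) (b := y₀ * e) he0
    rw [zero_add] at this
    exact this
  have hye : e * y * e = y := by
    conv_rhs => rw [hy, ← hy₀e, mul_assoc, h2, h1, ← mul_assoc]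
  refine ⟨y, SetLike.coe_mem _, hye, ?_⟩
  have h3 : (decompose 𝒜 (y₀ * v) (-d + d) : A) = y * v :=
    coe_decompose_mul_add_of_right_mem 𝒜 hv
  have h4 : (decompose 𝒜 (v * (y₀ * v)) (d + (-d + d)) : A)
      = v * (decompose 𝒜 (y₀ * v) (-d + d) : A) :=
    coe_decompose_mul_add_of_left_mem 𝒜 hv
  have h5 : d + (-d + d) = d := by abel
  have h6 : v * (y₀ * v) = v := by rw [← mul_assoc]; exact hy₀
  calc v * y * v = v * (decompose 𝒜 (y₀ * v) (-d + d) : A) := by rw [mul_assoc, h3]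
    _ = (decompose 𝒜 (v * (y₀ * v)) (d + (-d + d)) : A) := h4.symm
    _ = v := by rw [h5, h6, decompose_of_mem_same 𝒜 hv]

lemma stepA (he0 : e ∈ 𝒜 0) (heidem : e * e = e)
    (hcorner : ∀ γ : Γ, ∀ x ∈ 𝒜 γ, e * x * e = x → ∃ y : A, e * y * e = y ∧ x * y * x = x) :
    ∀ (m : ℕ) (d : Fin m → Γ) (v : Fin m → A),
    (∀ k, v k ∈ 𝒜 (d k)) → (∀ k, e * v k * e = v k) →
    ∃ (h : A) (c : Fin m → A),
      h ∈ 𝒜 (0:Γ) ∧ e * h * e = h ∧ h * h = h ∧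
      (∀ k, c k ∈ 𝒜 (-(d k))) ∧ (∀ k, e * c k * e = c k) ∧
      h = ∑ k, c k * v k ∧ (∀ k, v k * h = v k) := by
  intro m
  induction m with
  | zero =>
    intro d v _ _
    exact ⟨0, fun _ => 0, zero_mem _, by simp, by simp, fun k => k.elim0, fun k => k.elim0,
      by simp, fun k => k.elim0⟩
  | succ m ih =>
    intro d v hvmem hvcor
    obtain ⟨h, c, hh0, hhe, hhh, hcmem, hccor, hsum, hvh⟩ :=
      ih (fun k => d k.castSucc) (fun k => v k.castSucc) (fun k => hvmem _) (fun k => hvcor _)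
    set vl := v (Fin.last m) with hvl
    set dl := d (Fin.last m) with hdl
    set w : A := vl - vl * h with hw
    have hwmem : w ∈ 𝒜 dl :=
      sub_mem (hvmem _) (mem_cast 𝒜 (add_zero dl) (SetLike.mul_mem_graded (hvmem _) hh0))
    have hwcor : e * w * e = w := cor_sub (hvcor _) (cor_mul heidem (hvcor _) hhe)
    obtain ⟨y, hymem, hycor, hwyw⟩ := hom_inv 𝒜 he0 hcorner hwmem hwcor
    set q : A := y * w with hq
    have hq0 : q ∈ 𝒜 (0:Γ) :=
      mem_cast 𝒜 (neg_add_cancel dl) (SetLike.mul_mem_graded hymem hwmem)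
    have hqcor : e * q * e = q := cor_mul heidem hycor hwcor
    have hqq : q * q = q := by
      rw [hq, mul_assoc, ← mul_assoc w y w, hwyw]
    have hwh : w * h = 0 := by rw [hw, sub_mul, mul_assoc, hhh, sub_self]
    have hqh : q * h = 0 := by rw [hq, mul_assoc, hwh, mul_zero]
    have hwq : w * q = w := by rw [hq, ← mul_assoc]; exact hwyw
    refine ⟨h + q - h*q,
      Fin.snoc (fun k => c k - y*vl*(c k) + h*(y*vl*(c k))) (y - h*y), ?_, ?_, glue1 hhh hqq hqh,
      ?_, ?_, ?_, ?_⟩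
    · exact sub_mem (add_mem hh0 hq0) (mem_cast 𝒜 (add_zero 0) (SetLike.mul_mem_graded hh0 hq0))
    · exact cor_sub (cor_add hhe hqcor) (cor_mul heidem hhe hqcor)
    · intro k
      refine Fin.lastCases ?_ ?_ k
      · rw [Fin.snoc_last]
        exact sub_mem hymem (mem_cast 𝒜 (zero_add _) (SetLike.mul_mem_graded hh0 hymem))
      · intro k'
        rw [Fin.snoc_castSucc]
        have hm1 : y*vl*(c k') ∈ 𝒜 (-(d k'.castSucc)) := by
          refine mem_cast 𝒜 ?_
            (SetLike.mul_mem_graded (SetLike.mul_mem_graded hymem (hvmem _)) (hcmem k'))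
          abel
        exact add_mem (sub_mem (hcmem k') hm1)
          (mem_cast 𝒜 (zero_add _) (SetLike.mul_mem_graded hh0 hm1))
    · intro k
      refine Fin.lastCases ?_ ?_ k
      · rw [Fin.snoc_last]
        exact cor_sub hycor (cor_mul heidem hhe hycor)
      · intro k'
        rw [Fin.snoc_castSucc]
        have hm1 : e * (y*vl*(c k')) * e = y*vl*(c k') := by
          rw [mul_assoc y vl (c k')]
          exact cor_mul heidem hycor (cor_mul heidem (hvcor _) (hccor k'))
        exact cor_add (cor_sub (hccor k') hm1) (cor_mul heidem hhe hm1)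
    · rw [Fin.sum_univ_castSucc]
      simp only [Fin.snoc_castSucc, Fin.snoc_last]
      have hterm : ∀ k : Fin m, (c k - y*vl*(c k) + h*(y*vl*(c k))) * v k.castSucc
          = c k * v k.castSucc - (y*vl)*(c k * v k.castSucc)
            + (h*(y*vl))*(c k * v k.castSucc) := by
        intro k; noncomm_ring
      rw [Finset.sum_congr rfl (fun k _ => hterm k), Finset.sum_add_distrib,
        Finset.sum_sub_distrib, ← Finset.mul_sum, ← Finset.mul_sum, ← hsum]
      rw [hq, hw]
      noncomm_ring
    · intro k
      refine Fin.lastCases ?_ ?_ k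
      · show vl * (h + q - h*q) = vl
        have h1 : vl*q - vl*h*q = w := by rw [← sub_mul, ← hw]; exact hwq
        rw [mul_sub, mul_add, ← mul_assoc vl h q, add_sub_assoc, h1, hw]
        abel
      · intro k'
        show v k'.castSucc * (h + q - h*q) = v k'.castSucc
        rw [mul_sub, mul_add, ← mul_assoc (v k'.castSucc) h q, hvh k']
        abel

lemma stepC (he0 : e ∈ 𝒜 0) (heidem : e * e = e)
    (hcorner : ∀ γ : Γ, ∀ x ∈ 𝒜 γ, e * x * e = x → ∃ y : A, e * y * e = y ∧ x * y * x = x)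
    (n : ℕ) (lam : Fin n → Γ) :
    ∀ (m : ℕ) (g : Fin m → Γ) (X : Matrix (Fin n) (Fin m) A),
    (∀ i j, X i j ∈ 𝒜 (g j + lam i)) → (∀ i j, e * X i j * e = X i j) →
    ∃ (E : Matrix (Fin n) (Fin n) A) (C : Matrix (Fin m) (Fin n) A),
      (∀ i k, E i k ∈ 𝒜 (lam i - lam k)) ∧ (∀ i k, e * E i k * e = E i k) ∧
      E * E = E ∧ E * X = X ∧ E = X * C := by
  intro m
  induction m with
  | zero =>
    intro g X _ _
    refine ⟨0, 0, fun i k => by rw [Matrix.zero_apply]; exact zero_mem _, fun i k => by simp,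
      by simp, ?_, by rw [Matrix.mul_zero]⟩
    ext i j; exact j.elim0
  | succ m ih =>
    intro g X hXmem hXcor
    obtain ⟨E', C', hE'mem, hE'cor, hE'E', hE'X', hE'eq⟩ :=
      ih (fun j => g j.castSucc) (Matrix.of fun i j => X i j.castSucc)
        (fun i j => hXmem i j.castSucc) (fun i j => hXcor i j.castSucc)
    set X' : Matrix (Fin n) (Fin m) A := Matrix.of fun i j => X i j.castSucc with hX'def
    set vcol : Matrix (Fin n) (Fin 1) A := Matrix.of fun i _ => X i (Fin.last m) with hvcoldef
    set u : Matrix (Fin n) (Fin 1) A := vcol - E' * vcol with hudef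
    have huentry : ∀ i, u i 0 = X i (Fin.last m) - ∑ k, E' i k * X k (Fin.last m) := by
      intro i
      simp [hudef, Matrix.sub_apply, Matrix.mul_apply, hvcoldef]
    have humem : ∀ i, u i 0 ∈ 𝒜 (g (Fin.last m) + lam i) := by
      intro i
      rw [huentry i]
      refine sub_mem (hXmem _ _) (AddSubgroup.sum_mem _ fun k _ => ?_)
      exact mem_cast 𝒜 (by abel) (SetLike.mul_mem_graded (hE'mem i k) (hXmem k (Fin.last m)))
    have hucor : ∀ i, e * u i 0 * e = u i 0 := by
      intro i
      rw [huentry i]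
      exact cor_sub (hXcor _ _)
        (cor_sum fun k _ => cor_mul heidem (hE'cor i k) (hXcor k (Fin.last m)))
    obtain ⟨h, c, hh0, hhe, hhh, hcmem, hccor, hsum, hvh⟩ :=
      stepA 𝒜 he0 heidem hcorner n (fun i => g (Fin.last m) + lam i) (fun i => u i 0)
        humem hucor
    set Rw : Matrix (Fin 1) (Fin n) A := Matrix.of fun _ k => h * c k with hRwdef
    set F : Matrix (Fin n) (Fin n) A := u * Rw with hFdef
    have hFentry : ∀ i k, F i k = u i 0 * (h * c k) := by
      intro i k
      rw [hFdef, Matrix.mul_apply, Fin.sum_univ_one]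
      rfl
    have hE'u : E' * u = 0 := by
      rw [hudef, Matrix.mul_sub, ← Matrix.mul_assoc, hE'E', sub_self]
    have hE'F : E' * F = 0 := by
      rw [hFdef, ← Matrix.mul_assoc, hE'u, Matrix.zero_mul]
    have hFF : F * F = F := by
      ext i k
      rw [Matrix.mul_apply, hFentry i k]
      have hterm : ∀ l, F i l * F l k = (u i 0 * h) * ((c l * u l 0) * (h * c k)) := by
        intro l
        rw [hFentry, hFentry]
        noncomm_ring
      rw [Finset.sum_congr rfl fun l _ => hterm l, ← Finset.mul_sum, ← Finset.sum_mul, ← hsum,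
        ← mul_assoc, mul_assoc (u i 0) h h, hhh, ← mul_assoc, mul_assoc (u i 0) h h, hhh,
        mul_assoc]
    have hFu : F * u = u := by
      ext i p
      have hp0 : p = 0 := Subsingleton.elim _ _
      subst hp0
      rw [Matrix.mul_apply]
      have hterm : ∀ l, F i l * u l 0 = (u i 0 * h) * (c l * u l 0) := by
        intro l; rw [hFentry]; noncomm_ring
      rw [Finset.sum_congr rfl fun l _ => hterm l, ← Finset.mul_sum, ← hsum, mul_assoc, hhh]
      exact hvh i
    set E : Matrix (Fin n) (Fin n) A := E' + F - F * E' with hEdef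
    have hEE : E * E = E := glue2 hE'E' hFF hE'F
    have hEX' : E * X' = X' := by
      rw [hEdef, Matrix.sub_mul, Matrix.add_mul, Matrix.mul_assoc F E' X', hE'X',
        add_sub_cancel_right]
    have hveq : u + E' * vcol = vcol := by rw [hudef]; abel
    have hEv : E * vcol = vcol := by
      have hFv : F * vcol = u + F * (E' * vcol) := by
        conv_lhs => rw [← hveq]
        rw [Matrix.mul_add, hFu]
      rw [hEdef, Matrix.sub_mul, Matrix.add_mul, hFv, Matrix.mul_assoc F E' vcol]
      have : E' * vcol + (u + F * (E' * vcol)) - F * (E' * vcol) = u + E' * vcol := by abel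
      rw [this, hveq]
    have hEX : E * X = X := by
      ext i j
      refine Fin.lastCases ?_ (fun j' => ?_) j
      · have h1 := congrFun (congrFun hEv i) 0
        rw [Matrix.mul_apply] at h1 ⊢
        simpa [hvcoldef] using h1
      · have h1 := congrFun (congrFun hEX' i) j'
        rw [Matrix.mul_apply] at h1 ⊢
        simpa [hX'def] using h1
    have hFmem : ∀ i k, F i k ∈ 𝒜 (lam i - lam k) := by
      intro i k
      rw [hFentry]
      exact mem_cast 𝒜 (by abel)
        (SetLike.mul_mem_graded (humem i) (SetLike.mul_mem_graded hh0 (hcmem k)))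
    have hFcor : ∀ i k, e * F i k * e = F i k := by
      intro i k
      rw [hFentry]
      exact cor_mul heidem (hucor i) (cor_mul heidem hhe (hccor k))
    have hEmem : ∀ i k, E i k ∈ 𝒜 (lam i - lam k) := by
      intro i k
      have : E i k = E' i k + F i k - ∑ l, F i l * E' l k := by
        rw [hEdef]; simp [Matrix.sub_apply, Matrix.add_apply, Matrix.mul_apply]
      rw [this]
      refine sub_mem (add_mem (hE'mem i k) (hFmem i k)) (AddSubgroup.sum_mem _ fun l _ => ?_)
      exact mem_cast 𝒜 (by abel) (SetLike.mul_mem_graded (hFmem i l) (hE'mem l k))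
    have hEcor : ∀ i k, e * E i k * e = E i k := by
      intro i k
      have : E i k = E' i k + F i k - ∑ l, F i l * E' l k := by
        rw [hEdef]; simp [Matrix.sub_apply, Matrix.add_apply, Matrix.mul_apply]
      rw [this]
      exact cor_sub (cor_add (hE'cor i k) (hFcor i k))
        (cor_sum fun l _ => cor_mul heidem (hFcor i l) (hE'cor l k))
    set J : Matrix (Fin (m+1)) (Fin m) A := Matrix.of fun j j' => if j = j'.castSucc then 1 else 0
      with hJdef
    set Jl : Matrix (Fin (m+1)) (Fin 1) A := Matrix.of fun j _ => if j = Fin.last m then 1 else 0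
      with hJldef
    have hXJ : X * J = X' := by
      ext i j'
      rw [Matrix.mul_apply]
      simp [hJdef, hX'def, mul_ite, mul_one, mul_zero]
    have hXJl : X * Jl = vcol := by
      ext i p
      rw [Matrix.mul_apply]
      simp [hJldef, hvcoldef, mul_ite, mul_one, mul_zero]
    have hE'2 : E' = X * (J * C') := by rw [← Matrix.mul_assoc, hXJ]; exact hE'eq
    have hu2 : u = X * (Jl - (J * C') * vcol) := by
      rw [Matrix.mul_sub, ← Matrix.mul_assoc, hXJl, ← hE'2, ← hudef]
    have hF2 : F = X * ((Jl - (J * C') * vcol) * Rw) := by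
      rw [hFdef, ← Matrix.mul_assoc, ← hu2]
    refine ⟨E, J * C' + (Jl - (J * C') * vcol) * Rw - ((Jl - (J * C') * vcol) * Rw) * E',
      hEmem, hEcor, hEE, hEX, ?_⟩
    rw [Matrix.mul_sub, Matrix.mul_add, ← hE'2, ← hF2, ← Matrix.mul_assoc, ← hF2, hEdef]

lemma one_decomp (he0 : e ∈ 𝒜 0) (hfull : TwoSidedIdeal.span {e} = (⊤ : TwoSidedIdeal A)) :
    ∃ (N : ℕ) (α : Fin N → Γ) (a b : Fin N → A),
      (∀ i, a i ∈ 𝒜 (α i)) ∧ (∀ i, b i ∈ 𝒜 (-α i)) ∧ (1:A) = ∑ i, a i * e * b i := by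
  classical
  set S : Set A := {z | ∃ (N : ℕ) (α β : Fin N → Γ) (a b : Fin N → A),
    (∀ i, a i ∈ 𝒜 (α i)) ∧ (∀ i, b i ∈ 𝒜 (β i)) ∧ z = ∑ i, a i * e * b i} with hS
  have hzero : (0:A) ∈ S :=
    ⟨0, Fin.elim0, Fin.elim0, Fin.elim0, Fin.elim0, fun i => i.elim0, fun i => i.elim0, by simp⟩
  have hadd : ∀ {z w : A}, z ∈ S → w ∈ S → z + w ∈ S := by
    rintro z w ⟨N₁, α₁, β₁, a₁, b₁, ha₁, hb₁, rfl⟩ ⟨N₂, α₂, β₂, a₂, b₂, ha₂, hb₂, rfl⟩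
    refine ⟨N₁ + N₂, Fin.append α₁ α₂, Fin.append β₁ β₂, Fin.append a₁ a₂, Fin.append b₁ b₂,
      ?_, ?_, ?_⟩
    · intro i
      refine Fin.addCases (fun i' => ?_) (fun i' => ?_) i
      · simpa [Fin.append_left] using ha₁ i'
      · simpa [Fin.append_right] using ha₂ i'
    · intro i
      refine Fin.addCases (fun i' => ?_) (fun i' => ?_) i
      · simpa [Fin.append_left] using hb₁ i'
      · simpa [Fin.append_right] using hb₂ i'
    · rw [Fin.sum_univ_add]
      congr 1
      · exact Finset.sum_congr rfl fun i _ => by simp [Fin.append_left]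
      · exact Finset.sum_congr rfl fun i _ => by simp [Fin.append_right]
  have hneg : ∀ {z : A}, z ∈ S → -z ∈ S := by
    rintro z ⟨N, α, β, a, b, ha, hb, rfl⟩
    exact ⟨N, α, β, fun i => -(a i), b, fun i => neg_mem (ha i), hb, by simp [neg_mul]⟩
  have hsumS : ∀ (s : Finset Γ) (f : Γ → A), (∀ i ∈ s, f i ∈ S) →
      (∑ i ∈ s, f i) ∈ S := by
    intro s f hf
    induction s using Finset.induction with
    | empty => simpa using hzero
    | insert _ _ hx ih =>
      rw [Finset.sum_insert hx]
      exact hadd (hf _ (Finset.mem_insert_self _ _))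
        (ih fun i hi => hf i (Finset.mem_insert_of_mem hi))
  have hhomleft : ∀ {δ : Γ} {r : A}, r ∈ 𝒜 δ → ∀ {z : A}, z ∈ S → r * z ∈ S := by
    rintro δ r hr z ⟨N, α, β, a, b, ha, hb, rfl⟩
    refine ⟨N, fun i => δ + α i, β, fun i => r * a i, b,
      fun i => SetLike.mul_mem_graded hr (ha i), hb, ?_⟩
    rw [Finset.mul_sum]
    exact Finset.sum_congr rfl fun i _ => by rw [← mul_assoc, ← mul_assoc]
  have hhomright : ∀ {δ : Γ} {r : A}, r ∈ 𝒜 δ → ∀ {z : A}, z ∈ S → z * r ∈ S := by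
    rintro δ r hr z ⟨N, α, β, a, b, ha, hb, rfl⟩
    refine ⟨N, α, fun i => β i + δ, a, fun i => b i * r,
      ha, fun i => SetLike.mul_mem_graded (hb i) hr, ?_⟩
    rw [Finset.sum_mul]
    exact Finset.sum_congr rfl fun i _ => by rw [← mul_assoc]
  have hleft : ∀ {r z : A}, z ∈ S → r * z ∈ S := by
    intro r z hz
    have hr : r = ∑ δ ∈ (decompose 𝒜 r).support, (decompose 𝒜 r δ : A) :=
      (DirectSum.sum_support_decompose 𝒜 r).symm
    rw [hr, Finset.sum_mul]
    refine hsumS _ _ fun δ _ => ?_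
    exact hhomleft (SetLike.coe_mem _) hz
  have hright : ∀ {r z : A}, z ∈ S → z * r ∈ S := by
    intro r z hz
    have hr : r = ∑ δ ∈ (decompose 𝒜 r).support, (decompose 𝒜 r δ : A) :=
      (DirectSum.sum_support_decompose 𝒜 r).symm
    rw [hr, Finset.mul_sum]
    refine hsumS _ _ fun δ _ => ?_
    exact hhomright (SetLike.coe_mem _) hz
  have heS : e ∈ S := by
    refine ⟨1, fun _ => 0, fun _ => 0, fun _ => 1, fun _ => 1,
      fun _ => SetLike.one_mem_graded _, fun _ => SetLike.one_mem_graded _, by simp⟩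
  have h1S : (1:A) ∈ S := by
    have h1 : (1:A) ∈ TwoSidedIdeal.span {e} := by
      rw [hfull]; exact TwoSidedIdeal.mem_top _
    have := TwoSidedIdeal.mem_span_iff.mp h1
      (TwoSidedIdeal.mk' S hzero hadd hneg hleft hright)
      (by intro t ht
          rw [Set.mem_singleton_iff] at ht
          subst ht
          exact (TwoSidedIdeal.mem_mk' _ _ _ _ _ _ _).mpr heS)
    exact (TwoSidedIdeal.mem_mk' _ _ _ _ _ _ _).mp this
  obtain ⟨N, α, β, a, b, ha, hb, h1⟩ := h1S
  set b' : Fin N → A := fun i => if β i = -α i then b i else 0 with hb'def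
  have hterm : ∀ i, (GradedRing.proj 𝒜 0) (a i * e * b i) = a i * e * b' i := by
    intro i
    have hae : a i * e ∈ 𝒜 (α i) := mem_cast 𝒜 (add_zero _) (SetLike.mul_mem_graded (ha i) he0)
    have hmem : a i * e * b i ∈ 𝒜 (α i + β i) := SetLike.mul_mem_graded hae (hb i)
    by_cases hc : β i = -α i
    · have h0 : α i + β i = 0 := by rw [hc]; abel
      rw [GradedRing.proj_apply, decompose_of_mem_same 𝒜 (mem_cast 𝒜 h0 hmem)]
      rw [hb'def]; simp [hc]
    · have h0 : α i + β i ≠ 0 := by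
        intro hcon
        exact hc (by rw [eq_neg_iff_add_eq_zero, add_comm]; exact hcon)
      rw [GradedRing.proj_apply, decompose_of_mem_ne 𝒜 hmem h0]
      rw [hb'def]; simp [hc]
  have hone : (GradedRing.proj 𝒜 0) (1:A) = 1 := by
    rw [GradedRing.proj_apply, decompose_of_mem_same 𝒜 (SetLike.one_mem_graded 𝒜)]
  refine ⟨N, α, a, b', ha, ?_, ?_⟩
  · intro i
    rw [hb'def]
    by_cases hc : β i = -α i
    · simpa [hc] using mem_cast 𝒜 hc (hb i)
    · simp [hc, zero_mem]
  · conv_lhs => rw [← hone, h1]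
    rw [map_sum]
    exact Finset.sum_congr rfl fun i _ => hterm i

end graded
end GradedCornerAux

open GradedCornerAux in
/-- For a full homogeneous idempotent `e` of degree `0`, the ring `A` is graded
von Neumann regular iff the corner ring `eAe` is graded von Neumann regular. -/
theorem graded_regular_iff_full_corner_graded_regular
    {Γ : Type*} [AddCommGroup Γ] [DecidableEq Γ]
    {A : Type*} [Ring A] (𝒜 : Γ → AddSubgroup A) [GradedRing 𝒜]
    (e : A) (he0 : e ∈ 𝒜 0) (heidem : e * e = e)
    (hfull : TwoSidedIdeal.span {e} = (⊤ : TwoSidedIdeal A)) :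
    GradedVNRegular 𝒜 ↔
      ∀ γ : Γ, ∀ x ∈ 𝒜 γ, e * x * e = x →
        ∃ y : A, e * y * e = y ∧ x * y * x = x := by
  constructor
  · intro hreg γ x hx hxe
    obtain ⟨y, hy⟩ := hreg γ x hx
    refine ⟨e*y*e, ?_, ?_⟩
    · calc e*(e*y*e)*e = (e*e)*y*(e*e) := by noncomm_ring
        _ = e*y*e := by rw [heidem]
    · calc x*(e*y*e)*x = (x*e)*y*(e*x) := by noncomm_ring
        _ = x*y*x := by rw [cor_er heidem hxe, cor_el heidem hxe]
        _ = x := hy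
  · intro hcorner γ x hx
    obtain ⟨N, α, a, b, ha, hb, h1⟩ := one_decomp 𝒜 he0 hfull
    set X : Matrix (Fin N) (Fin N) A := Matrix.of (fun i j => e * (b i * x * a j) * e)
      with hXdef
    have hXmem : ∀ i j, X i j ∈ 𝒜 ((γ + α j) + -(α i)) := by
      intro i j
      refine mem_cast 𝒜 (show ((0:Γ) + (-α i + γ + α j)) + 0 = (γ + α j) + -(α i) by abel) ?_
      exact SetLike.mul_mem_graded
        (SetLike.mul_mem_graded he0
          (SetLike.mul_mem_graded (SetLike.mul_mem_graded (hb i) hx) (ha j))) he0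
    have hXcor : ∀ i j, e * X i j * e = X i j := by
      intro i j
      show e*(e*(b i*x*a j)*e)*e = _
      calc e*(e*(b i*x*a j)*e)*e = (e*e)*(b i*x*a j)*(e*e) := by noncomm_ring
        _ = X i j := by rw [heidem]; rfl
    obtain ⟨E, C, hEmem, hEcor, hEE, hEX, hEeq⟩ :=
      stepC 𝒜 he0 heidem hcorner N (fun i => -(α i)) N (fun j => γ + α j) X hXmem hXcor
    have hXZ : X * (C * E) = E := by rw [← Matrix.mul_assoc, ← hEeq, hEE]
    have hXZX : X * (C * E) * X = X := by rw [hXZ, hEX]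
    set Q : Matrix (Fin 1) (Fin N) A := Matrix.of fun _ j => a j * e with hQdef
    set Pb : Matrix (Fin N) (Fin 1) A := Matrix.of fun i _ => e * b i with hPbdef
    set xM : Matrix (Fin 1) (Fin 1) A := Matrix.of fun _ _ => x with hxMdef
    have hX : X = Pb * xM * Q := by
      ext i j
      rw [Matrix.mul_apply, Fin.sum_univ_one, Matrix.mul_apply, Fin.sum_univ_one]
      show e*(b i * x * a j)*e = ((e * b i) * x) * (a j * e)
      noncomm_ring
    have hQP : Q * Pb = (1 : Matrix (Fin 1) (Fin 1) A) := by
      ext p q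
      have hpq : p = q := Subsingleton.elim _ _
      subst hpq
      rw [Matrix.mul_apply, Matrix.one_apply_eq]
      have hterm : ∀ j, Q p j * Pb j p = a j * e * b j := by
        intro j
        show (a j * e) * (e * b j) = a j * e * b j
        calc (a j * e) * (e * b j) = a j * (e*e) * b j := by noncomm_ring
          _ = a j * e * b j := by rw [heidem]
      rw [Finset.sum_congr rfl fun j _ => hterm j, ← h1]
    have hQX : Q * X = xM * Q := by
      rw [hX, ← Matrix.mul_assoc, ← Matrix.mul_assoc, hQP, Matrix.one_mul]
    have hXP : X * Pb = Pb * xM := by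
      rw [hX, Matrix.mul_assoc, hQP, Matrix.mul_one]
    have h2 : xM * (Q * (C*E) * Pb) * xM = ((xM * Q) * (C*E)) * (Pb * xM) := by
      simp only [Matrix.mul_assoc]
    have h3 : ((xM * Q) * (C*E)) * (Pb * xM) = ((Q * X) * (C*E)) * (X * Pb) := by
      rw [hQX, hXP]
    have h4 : ((Q * X) * (C*E)) * (X * Pb) = Q * ((X * (C*E) * X) * Pb) := by
      simp only [Matrix.mul_assoc]
    have h6 : Q * (X * Pb) = xM := by
      rw [hXP, ← Matrix.mul_assoc, hQP, Matrix.one_mul]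
    have hkey : xM * (Q * (C*E) * Pb) * xM = xM := by
      rw [h2, h3, h4, hXZX, h6]
    refine ⟨(Q * (C*E) * Pb) 0 0, ?_⟩
    have hent : ∀ (M1 M2 : Matrix (Fin 1) (Fin 1) A), (M1*M2) 0 0 = M1 0 0 * M2 0 0 :=
      fun M1 M2 => by rw [Matrix.mul_apply, Fin.sum_univ_one]
    have hfin := congrFun (congrFun hkey 0) 0
    rw [hent, hent] at hfin
    exact hfin
end

section
/- Let A be a unital ℤ-graded ring and suppose there exist t₊ ∈ A_1 and t₋ ∈ A_{−1} with t₋*t₊ = 1 (so that A is a corner skew Laurent polynomial ring A_0[t₊, t₋, φ] over its degree-zero component, with corner isomorphism φ(a) = t₊·a·t₋ onto p·A_0·p where p = t₊·t₋). Then A is graded von Neumann regular if and only if the ring A_0 is von Neumann regular. -/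
/-- A corner skew Laurent polynomial ring — i.e. a unital ℤ-graded ring possessing
`t₊ ∈ A₁` with a left inverse `t₋ ∈ A₋₁` — is graded von Neumann regular iff its
degree-zero component ring `A₀` is von Neumann regular. -/
theorem corner_skew_laurent_graded_regular_iff
    {A : Type*} [Ring A] (𝒜 : ℤ → AddSubgroup A) [GradedRing 𝒜]
    (tp tm : A) (htp : tp ∈ 𝒜 1) (htm : tm ∈ 𝒜 (-1)) (hinv : tm * tp = 1) :
    GradedVNRegular 𝒜 ↔ ∀ x ∈ 𝒜 (0 : ℤ), ∃ y ∈ 𝒜 (0 : ℤ), x * y * x = x := by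
  have key : ∀ k : ℕ, tm ^ k * tp ^ k = 1 := by
    intro k
    induction k with
    | zero => simp
    | succ k ih =>
      rw [pow_succ, pow_succ', mul_assoc, ← mul_assoc tm, hinv, one_mul, ih]
  classical
  constructor
  · intro h x hx
    obtain ⟨y, hy⟩ := h 0 x hx
    refine ⟨(DirectSum.decompose 𝒜 y 0 : A), SetLike.coe_mem _, ?_⟩
    have hmem : ∀ k : ℤ, x * (DirectSum.decompose 𝒜 y k : A) * x ∈ 𝒜 k := by
      intro k
      have := SetLike.mul_mem_graded
        (SetLike.mul_mem_graded hx (SetLike.coe_mem (DirectSum.decompose 𝒜 y k))) hx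
      simpa using this
    have hsum : x * y * x =
        ∑ k ∈ (DirectSum.decompose 𝒜 y).support, x * (DirectSum.decompose 𝒜 y k : A) * x := by
      conv_lhs => rw [← DirectSum.sum_support_decompose 𝒜 y]
      rw [Finset.mul_sum, Finset.sum_mul]
    have hproj : GradedRing.proj 𝒜 0 (x * y * x) = x * (DirectSum.decompose 𝒜 y 0 : A) * x := by
      rw [hsum, map_sum, Finset.sum_eq_single 0]
      · rw [GradedRing.proj_apply, DirectSum.decompose_of_mem_same 𝒜 (hmem 0)]
      · intro k _ hk
        rw [GradedRing.proj_apply, DirectSum.decompose_of_mem_ne 𝒜 (hmem k) hk]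
      · intro h0
        rw [DFinsupp.notMem_support_iff] at h0
        rw [h0]
        simp
    rw [hy, GradedRing.proj_apply, DirectSum.decompose_of_mem_same 𝒜 hx] at hproj
    exact hproj.symm
  · intro h n x hx
    rcases le_or_gt 0 n with hn | hn
    · obtain ⟨m, rfl⟩ := Int.eq_ofNat_of_zero_le hn
      have htmm : tm ^ m ∈ 𝒜 (-(m : ℤ)) := by
        have := SetLike.pow_mem_graded m htm
        simpa using this
      have ha : x * tm ^ m ∈ 𝒜 (0 : ℤ) := by
        have := SetLike.mul_mem_graded hx htmm
        simpa using this
      obtain ⟨b, hb, hab⟩ := h _ ha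
      have hx' : x * tm ^ m * tp ^ m = x := by rw [mul_assoc, key, mul_one]
      refine ⟨tm ^ m * b, ?_⟩
      nth_rewrite 2 [← hx']
      have e : x * (tm ^ m * b) * (x * tm ^ m * tp ^ m) =
          x * tm ^ m * b * (x * tm ^ m) * tp ^ m := by noncomm_ring
      rw [e, hab]
      exact hx'
    · set m : ℕ := (-n).toNat with hm
      have hmn : (m : ℤ) = -n := Int.toNat_of_nonneg (by omega)
      have htpm : tp ^ m ∈ 𝒜 (m : ℤ) := by
        have := SetLike.pow_mem_graded m htp
        simpa using this
      have ha : tp ^ m * x ∈ 𝒜 (0 : ℤ) := by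
        have := SetLike.mul_mem_graded htpm hx
        rwa [hmn, neg_add_cancel] at this
      obtain ⟨b, hb, hab⟩ := h _ ha
      have hxa : tm ^ m * (tp ^ m * x) = x := by rw [← mul_assoc, key, one_mul]
      refine ⟨b * tp ^ m, ?_⟩
      calc x * (b * tp ^ m) * x
          = tm ^ m * (tp ^ m * x) * (b * tp ^ m) * (tm ^ m * (tp ^ m * x)) := by rw [hxa]
        _ = tm ^ m * ((tp ^ m * x) * b * (tp ^ m * (tm ^ m * (tp ^ m * x)))) := by
            simp only [mul_assoc]
        _ = tm ^ m * ((tp ^ m * x) * b * (tp ^ m * x)) := by rw [hxa]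
        _ = tm ^ m * (tp ^ m * x) := by rw [hab]
        _ = x := hxa
end

section
/- Let A be a unital Γ-graded ring which is strongly graded, i.e., A_γ·A_δ = A_{γ+δ} for all γ, δ ∈ Γ (equivalently, 1 lies in the additive subgroup generated by products x*y with x ∈ A_γ and y ∈ A_{−γ}, for every γ). Then A is graded von Neumann regular if and only if the degree-zero component A_0 is a von Neumann regular ring. -/
/-- Combining two idempotents in a von Neumann regular setting: the purely
ring-theoretic computation. -/
private lemma vnr_combine {A : Type*} [Ring A] {e₁ e₂ d p q : A}
    (h1 : e₁ * e₁ = e₁)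
    (hd : (e₂ - e₁ * e₂) * d * (e₂ - e₁ * e₂) = e₂ - e₁ * e₂)
    (hp : e₁ * p = p) (hq : e₂ * q = q) :
    (e₁ + (e₂ - e₁ * e₂) * d * (1 - e₁)) * (e₁ + (e₂ - e₁ * e₂) * d * (1 - e₁))
        = e₁ + (e₂ - e₁ * e₂) * d * (1 - e₁) ∧
      (e₁ + (e₂ - e₁ * e₂) * d * (1 - e₁)) * p = p ∧
      (e₁ + (e₂ - e₁ * e₂) * d * (1 - e₁)) * q = q := by
  have hs : e₂ - e₁ * e₂ = e₂ - e₁ * e₂ := rfl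
  set s := e₂ - e₁ * e₂ with hs'
  have he1s : e₁ * s = 0 := by
    rw [mul_sub, ← mul_assoc, h1, sub_self]
  have h1s : (1 - e₁) * s = s := by
    rw [sub_mul, one_mul, he1s, sub_zero]
  have hfs : s * d * (1 - e₁) * s = s := by
    rw [mul_assoc (s * d), h1s, hd]
  have he1f : e₁ * (s * d * (1 - e₁)) = 0 := by
    rw [← mul_assoc, ← mul_assoc, he1s, zero_mul, zero_mul]
  have hfe1 : s * d * (1 - e₁) * e₁ = 0 := by
    rw [mul_assoc (s * d), sub_mul 1 e₁ e₁, one_mul, h1, sub_self, mul_zero]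
  have hff : s * d * (1 - e₁) * (s * d * (1 - e₁)) = s * d * (1 - e₁) := by
    calc s * d * (1 - e₁) * (s * d * (1 - e₁))
        = s * d * (1 - e₁) * s * d * (1 - e₁) := by simp only [mul_assoc]
      _ = s * d * (1 - e₁) := by rw [hfs]
  refine ⟨?_, ?_, ?_⟩
  · rw [add_mul, mul_add, mul_add, h1, hff, he1f, hfe1, add_zero, zero_add]
  · have hfp : s * d * (1 - e₁) * p = 0 := by
      rw [mul_assoc (s * d), sub_mul 1 e₁ p, one_mul, hp, sub_self, mul_zero]
    rw [add_mul, hp, hfp, add_zero]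
  · have h1q : (1 - e₁) * q = s * q := by
      calc (1 - e₁) * q = (1 - e₁) * (e₂ * q) := by rw [hq]
        _ = ((1 - e₁) * e₂) * q := by rw [mul_assoc]
        _ = s * q := by rw [sub_mul 1 e₁ e₂, one_mul]
    have hfq : s * d * (1 - e₁) * q = q - e₁ * q := by
      calc s * d * (1 - e₁) * q = s * d * ((1 - e₁) * q) := by rw [mul_assoc (s * d)]
        _ = s * d * (s * q) := by rw [h1q]
        _ = s * d * s * q := by rw [← mul_assoc]
        _ = s * q := by rw [hd]
        _ = (1 - e₁) * q := h1q.symm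
        _ = q - e₁ * q := by rw [sub_mul, one_mul]
    rw [add_mul, hfq, add_sub_cancel]

/-- A strongly graded unital ring (i.e. `A_γ · A_δ = A_{γ+δ}` for all `γ, δ`) is
graded von Neumann regular iff its degree-zero component ring `A₀` is von Neumann
regular. -/
theorem strongly_graded_regular_iff_zero_component_regular
    {Γ : Type*} [AddCommGroup Γ] [DecidableEq Γ]
    {A : Type*} [Ring A] (𝒜 : Γ → AddSubgroup A) [GradedRing 𝒜]
    (hstrong : ∀ γ δ : Γ, (𝒜 (γ + δ) : Set A) ⊆
      (AddSubgroup.closure {x : A | ∃ a ∈ 𝒜 γ, ∃ b ∈ 𝒜 δ, x = a * b} : Set A)) :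
    GradedVNRegular 𝒜 ↔ ∀ x ∈ 𝒜 (0 : Γ), ∃ y ∈ 𝒜 (0 : Γ), x * y * x = x := by
  have hmul0 : ∀ u v : A, u ∈ 𝒜 0 → v ∈ 𝒜 0 → u * v ∈ 𝒜 0 := fun u v hu hv => by
    simpa using SetLike.mul_mem_graded hu hv
  constructor
  · -- graded regular → A₀ regular
    intro hreg x hx
    obtain ⟨y, hxyx⟩ := hreg 0 x hx
    refine ⟨(DirectSum.decompose 𝒜 y 0 : A), SetLike.coe_mem _, ?_⟩
    have key : ∀ z : A,
        ((DirectSum.decompose 𝒜 (x * z * x) 0 : 𝒜 0) : A)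
          = x * ((DirectSum.decompose 𝒜 z 0 : 𝒜 0) : A) * x := by
      refine DirectSum.Decomposition.inductionOn 𝒜 ?_ ?_ ?_
      · simp
      · intro i m
        by_cases hi : i = (0 : Γ)
        · subst hi
        
          rw [DirectSum.decompose_of_mem_same 𝒜 m.2]
          have : x * (m : A) * x ∈ 𝒜 0 :=
            hmul0 _ _ (hmul0 _ _ hx m.2) hx
          rw [DirectSum.decompose_of_mem_same 𝒜 this]
        · have hm0 : ((DirectSum.decompose 𝒜 (m : A) 0 : 𝒜 0) : A) = 0 := by
            rw [DirectSum.decompose_of_mem_ne 𝒜 m.2 hi]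
          have hxm : x * (m : A) * x ∈ 𝒜 i := by
            have := SetLike.mul_mem_graded (SetLike.mul_mem_graded hx m.2) hx
            simpa using this
          rw [DirectSum.decompose_of_mem_ne 𝒜 hxm hi, hm0, mul_zero, zero_mul]
      · intro m m' hm hm'
        have : x * (m + m') * x = x * m * x + x * m' * x := by noncomm_ring
        rw [this, DirectSum.decompose_add, DirectSum.add_apply,
          AddSubgroup.coe_add, hm, hm', DirectSum.decompose_add, DirectSum.add_apply,
          AddSubgroup.coe_add]
        noncomm_ring
    calc x * (DirectSum.decompose 𝒜 y 0 : A) * x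
        = ((DirectSum.decompose 𝒜 (x * y * x) 0 : 𝒜 0) : A) := (key y).symm
      _ = ((DirectSum.decompose 𝒜 x 0 : 𝒜 0) : A) := by rw [hxyx]
      _ = x := DirectSum.decompose_of_mem_same 𝒜 hx
  · -- A₀ regular → graded regular
    intro h0 γ x hx
    have h1 : (1 : A) ∈
        AddSubgroup.closure {z : A | ∃ a ∈ 𝒜 (-γ), ∃ b ∈ 𝒜 γ, z = a * b} := by
      apply hstrong (-γ) γ
      show (1 : A) ∈ 𝒜 (-γ + γ)
      simpa using SetLike.one_mem_graded 𝒜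
    have key : ∀ z ∈ AddSubgroup.closure {z : A | ∃ a ∈ 𝒜 (-γ), ∃ b ∈ 𝒜 γ, z = a * b},
        ∃ e w : A, e ∈ 𝒜 0 ∧ e * e = e ∧ e = x * w ∧ e * (x * z) = x * z := by
      intro z hz
      induction hz using AddSubgroup.closure_induction with
      | mem v hv =>
        obtain ⟨a, ha, b, hb, rfl⟩ := hv
        have hxa : x * a ∈ 𝒜 0 := by
          have := SetLike.mul_mem_graded hx ha
          simpa using this
        obtain ⟨c, hc, hcc⟩ := h0 (x * a) hxa
        refine ⟨x * a * c, a * c, hmul0 _ _ hxa hc, ?_, (mul_assoc x a c), ?_⟩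
        · calc x * a * c * (x * a * c) = x * a * c * (x * a) * c := by
                simp only [mul_assoc]
            _ = x * a * c := by rw [hcc]
        · calc x * a * c * (x * (a * b)) = x * a * c * (x * a) * b := by
                simp only [mul_assoc]
            _ = x * a * b := by rw [hcc]
            _ = x * (a * b) := by rw [mul_assoc]
      | zero =>
        exact ⟨0, 0, zero_mem _, by rw [zero_mul], by rw [mul_zero], by
          rw [mul_zero, zero_mul]⟩
      | add z₁ z₂ hz₁ hz₂ ih₁ ih₂ =>
        obtain ⟨e₁, w₁, he₁m, he₁, hw₁, hp⟩ := ih₁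
        obtain ⟨e₂, w₂, he₂m, he₂, hw₂, hq⟩ := ih₂
        have hsm : e₂ - e₁ * e₂ ∈ 𝒜 0 := sub_mem he₂m (hmul0 _ _ he₁m he₂m)
        obtain ⟨d, hdm, hd⟩ := h0 _ hsm
        obtain ⟨hEE, hEp, hEq⟩ := vnr_combine he₁ hd hp hq
        refine ⟨e₁ + (e₂ - e₁ * e₂) * d * (1 - e₁),
          w₁ + (w₂ - w₁ * e₂) * d * (1 - e₁), ?_, hEE, ?_, ?_⟩
        · exact add_mem he₁m
            (hmul0 _ _ (hmul0 _ _ hsm hdm) (sub_mem (SetLike.one_mem_graded 𝒜) he₁m))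
        · rw [hw₁, hw₂]
          noncomm_ring
        · rw [mul_add, mul_add, hEp, hEq]
      | neg z hz ih =>
        obtain ⟨e, w, hem, he, hw, hexz⟩ := ih
        exact ⟨e, w, hem, he, hw, by rw [mul_neg, mul_neg, hexz]⟩
    obtain ⟨e, w, _, _, hw, hex⟩ := key 1 h1
    rw [mul_one] at hex
    rw [hw] at hex
    exact ⟨w, hex⟩
end

section
/- Let A be a unital Γ-graded ring which is graded von Neumann regular, and let e, f be idempotents lying in A_0. Then there exists an idempotent g ∈ A_0 such that the right ideal e·A + f·A equals g·A. -/
section aux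

variable {Γ : Type*} [AddCommGroup Γ] [DecidableEq Γ]
    {A : Type*} [Ring A] (𝒜 : Γ → AddSubgroup A) [GradedRing 𝒜]

lemma decompose_mul_left_zero {t : A} (ht : t ∈ 𝒜 0) (y : A) (j : Γ) :
    (DirectSum.decompose 𝒜 (t * y) j : A) = t * DirectSum.decompose 𝒜 y j := by
  lift t to 𝒜 (0 : Γ) using ht
  rw [DirectSum.decompose_mul, DirectSum.decompose_coe]
  conv_lhs => rw [show j = 0 + j from (zero_add j).symm]
  exact DirectSum.coe_of_mul_apply_add (A := fun i => 𝒜 i) t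
    (DirectSum.decompose 𝒜 y) j

lemma decompose_mul_right_zero {t : A} (ht : t ∈ 𝒜 0) (y : A) (j : Γ) :
    (DirectSum.decompose 𝒜 (y * t) j : A) = (DirectSum.decompose 𝒜 y j : A) * t := by
  lift t to 𝒜 (0 : Γ) using ht
  rw [DirectSum.decompose_mul, DirectSum.decompose_coe]
  conv_lhs => rw [show j = j + 0 from (add_zero j).symm]
  exact DirectSum.coe_mul_of_apply_add (A := fun i => 𝒜 i)
    (DirectSum.decompose 𝒜 y) t j

lemma mem_span_singleton_op {A : Type*} [Ring A] {x m : A} :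
    m ∈ Submodule.span Aᵐᵒᵖ {x} ↔ ∃ a : A, x * a = m := by
  rw [Submodule.mem_span_singleton]
  constructor
  · rintro ⟨a, rfl⟩; exact ⟨a.unop, rfl⟩
  · rintro ⟨a, rfl⟩; exact ⟨MulOpposite.op a, rfl⟩

/-- Ungraded core of the argument: if `e, h` are idempotents with `e*h = 0`,
`h*t = t`, `h ∈ tA` and `t = f - e*f`, then `g := e + h - h*e` is an idempotent
with `gA = eA + fA`. -/
lemma span_sup_eq_span_idem {A : Type*} [Ring A] {e h f t : A} (he : e * e = e)
    (hhh : h * h = h) (heh : e * h = 0) (hht : h * t = t)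
    (hth : ∃ a : A, t * a = h) (htf : t = f - e * f) :
    (e + h - h * e) * (e + h - h * e) = e + h - h * e ∧
    Submodule.span Aᵐᵒᵖ {e} ⊔ Submodule.span Aᵐᵒᵖ {f}
      = Submodule.span Aᵐᵒᵖ {e + h - h * e} := by
  have heg : e * (e + h - h * e) = e := by
    rw [mul_sub, mul_add, he, heh, ← mul_assoc, heh, zero_mul, sub_zero, add_zero]
  have hhg : h * (e + h - h * e) = h := by
    rw [mul_sub, mul_add, hhh, ← mul_assoc, hhh]
    abel
  have hg2 : (e + h - h * e) * (e + h - h * e) = e + h - h * e := by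
    rw [sub_mul, add_mul, heg, hhg, mul_assoc, heg]
  have hge : (e + h - h * e) * e = e := by
    rw [sub_mul, add_mul, he, mul_assoc, he]
    abel
  have hgh : (e + h - h * e) * h = h := by
    rw [sub_mul, add_mul, heh, hhh, mul_assoc, heh, mul_zero, sub_zero, zero_add]
  have hgt : (e + h - h * e) * t = t := by
    rw [← hht, ← mul_assoc, hgh]
  refine ⟨hg2, le_antisymm (sup_le ?_ ?_) ?_⟩
  · rw [Submodule.span_singleton_le_iff_mem, mem_span_singleton_op]
    exact ⟨e, hge⟩
  · rw [Submodule.span_singleton_le_iff_mem, mem_span_singleton_op]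
    refine ⟨e * f + t, ?_⟩
    rw [mul_add, ← mul_assoc, hge, hgt, htf]
    abel
  · rw [Submodule.span_singleton_le_iff_mem]
    have h_e : e ∈ Submodule.span Aᵐᵒᵖ {e} ⊔ Submodule.span Aᵐᵒᵖ {f} :=
      Submodule.mem_sup_left (Submodule.mem_span_singleton_self e)
    have h_emem : ∀ a : A, e * a ∈ Submodule.span Aᵐᵒᵖ {e} ⊔ Submodule.span Aᵐᵒᵖ {f} :=
      fun a => Submodule.mem_sup_left (mem_span_singleton_op.mpr ⟨a, rfl⟩)
    have h_fmem : ∀ a : A, f * a ∈ Submodule.span Aᵐᵒᵖ {e} ⊔ Submodule.span Aᵐᵒᵖ {f} :=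
      fun a => Submodule.mem_sup_right (mem_span_singleton_op.mpr ⟨a, rfl⟩)
    have htmem : ∀ a : A, t * a ∈ Submodule.span Aᵐᵒᵖ {e} ⊔ Submodule.span Aᵐᵒᵖ {f} := by
      intro a
      have : t * a = f * a - e * (f * a) := by
        rw [htf, sub_mul, mul_assoc]
      rw [this]
      exact sub_mem (h_fmem a) (h_emem (f * a))
    obtain ⟨a, ha⟩ := hth
    have hhe : h * e = t * (a * e) := by rw [← mul_assoc, ha]
    have : e + h - h * e = e + (t * a - t * (a * e)) := by
      rw [ha, hhe]; abel
    rw [this]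
    exact add_mem h_e (sub_mem (htmem a) (htmem (a * e)))

end aux

/-- In a graded von Neumann regular unital ring, the sum of two right ideals
generated by degree-zero idempotents is again generated by a degree-zero
idempotent. (Right ideals are submodules of `A` as a right `A`-module, i.e.
`Aᵐᵒᵖ`-submodules; `Submodule.span Aᵐᵒᵖ {e} = e·A`.) -/
theorem sum_of_idempotent_right_ideals_of_graded_regular
    {Γ : Type*} [AddCommGroup Γ] [DecidableEq Γ]
    {A : Type*} [Ring A] (𝒜 : Γ → AddSubgroup A) [GradedRing 𝒜]
    (hA : GradedVNRegular 𝒜)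
    (e f : A) (he : e * e = e) (he0 : e ∈ 𝒜 0) (hf : f * f = f) (hf0 : f ∈ 𝒜 0) :
    ∃ g : A, g * g = g ∧ g ∈ 𝒜 0 ∧
      Submodule.span Aᵐᵒᵖ {e} ⊔ Submodule.span Aᵐᵒᵖ {f} = Submodule.span Aᵐᵒᵖ {g} := by
  classical
  have hef0 : e * f ∈ 𝒜 0 := by
    simpa using SetLike.GradedMul.mul_mem he0 hf0
  have ht0 : f - e * f ∈ 𝒜 0 := sub_mem hf0 hef0
  have het : e * (f - e * f) = 0 := by
    rw [mul_sub, ← mul_assoc, he, sub_self]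
  obtain ⟨y, hy⟩ := hA 0 (f - e * f) ht0
  -- replace y by its degree-zero component
  have hy0mem : (DirectSum.decompose 𝒜 y 0 : A) ∈ 𝒜 0 := SetLike.coe_mem _
  have hty : (f - e * f) * (DirectSum.decompose 𝒜 y 0 : A) * (f - e * f) = f - e * f := by
    have := congrArg (fun z => (DirectSum.decompose 𝒜 z 0 : A)) hy
    simp only at this
    rwa [decompose_mul_right_zero 𝒜 ht0, decompose_mul_left_zero 𝒜 ht0,
      DirectSum.decompose_of_mem_same 𝒜 ht0] at this
  set t : A := f - e * f with ht_def
  set y0 : A := (DirectSum.decompose 𝒜 y 0 : A) with hy0_def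
  have hh0 : t * y0 ∈ 𝒜 0 := by
    simpa using SetLike.GradedMul.mul_mem ht0 hy0mem
  have hhh : (t * y0) * (t * y0) = t * y0 := by
    rw [← mul_assoc, hty]
  have heh : e * (t * y0) = 0 := by rw [← mul_assoc, het, zero_mul]
  have hht : (t * y0) * t = t := by rw [hty]
  obtain ⟨hg2, hspan⟩ := span_sup_eq_span_idem he hhh heh hht ⟨y0, rfl⟩ ht_def
  refine ⟨e + t * y0 - t * y0 * e, hg2, ?_, hspan⟩
  exact sub_mem (add_mem he0 hh0) (by simpa using SetLike.GradedMul.mul_mem hh0 he0)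
end
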